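/- arXiv:1309.7528 — 9 statements merged into one kernel-verified Lean document; each statement's English description precedes it below -/
import Mathlib

section
/- For every probability distribution P_XY on 𝒳×𝒴, lim_{θ→0} 2[H(X|Y) − H↓_{1+θ}(X|Y)]/θ = V(X|Y), i.e., the conditional varentropy V(X|Y) equals the limit of 2[H(X|Y) − H↓_{1+θ}(X|Y)]/θ as θ→0. -/
open Real Filter

/-- Marginal distribution on `𝒴`. -/
noncomputable def margY {𝒳 𝒴 : Type*} [Fintype 𝒳] (P : 𝒳 × 𝒴 → ℝ) (y : 𝒴) : ℝ :=
  ∑ x : 𝒳, P (x, y)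

/-- Lower conditional Rényi entropy `H↓_{1+θ}(X|Y)`. -/
noncomputable def condRenyiDown {𝒳 𝒴 : Type*} [Fintype 𝒳] [Fintype 𝒴]
    (P : 𝒳 × 𝒴 → ℝ) (θ : ℝ) : ℝ :=
  -(1 / θ) * Real.log (∑ x : 𝒳, ∑ y : 𝒴,
    if 0 < P (x, y) then P (x, y) ^ (1 + θ) * margY P y ^ (-θ) else 0)

/-- Conditional entropy `H(X|Y)`. -/
noncomputable def condEnt {𝒳 𝒴 : Type*} [Fintype 𝒳] [Fintype 𝒴]
    (P : 𝒳 × 𝒴 → ℝ) : ℝ :=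
  -∑ x : 𝒳, ∑ y : 𝒴,
    if 0 < P (x, y) then P (x, y) * Real.log (P (x, y) / margY P y) else 0

/-- Conditional varentropy `V(X|Y)`. -/
noncomputable def condVarEnt {𝒳 𝒴 : Type*} [Fintype 𝒳] [Fintype 𝒴]
    (P : 𝒳 × 𝒴 → ℝ) : ℝ :=
  (∑ x : 𝒳, ∑ y : 𝒴,
    if 0 < P (x, y) then P (x, y) * (Real.log (P (x, y) / margY P y)) ^ 2 else 0)
  - (condEnt P) ^ 2


/-! On the support of `P`, put `L := log (P / P_Y)` and let `K θ := log ∑ P exp (θ L)` be the cumulant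
generating function of `L` under `P`. Then `θ H↓_{1+θ}(X|Y) = -K θ`, `H(X|Y) = -K'(0)` and
`V(X|Y) = K''(0)`, so `2 (H - H↓_{1+θ}) / θ = 2 (K θ - K 0 - θ K'(0)) / θ²`, which tends to `K''(0)`
by L'Hôpital's rule. -/

open Topology

theorem tendsto_two_mul_taylor_remainder_div_sq {f f' : ℝ → ℝ} {a f'' : ℝ}
    (hf : ∀ᶠ x in 𝓝 a, HasDerivAt f (f' x) x) (hf' : HasDerivAt f' f'' a) :
    Tendsto (fun x => 2 * (f x - f a - (x - a) * f' a) / (x - a) ^ 2) (𝓝[≠] a) (𝓝 f'') := by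
  have hslope : Tendsto (fun x => (f' x - f' a) / (x - a)) (𝓝[≠] a) (𝓝 f'') := by
    simpa only [slope_fun_def_field] using hf'.tendsto_slope
  have hcont : ContinuousAt f a := hf.self_of_nhds.continuousAt
  refine HasDerivAt.lhopital_zero_nhdsNE (f' := fun x => 2 * (f' x - f' a))
    (g' := fun x => 2 * (x - a)) ?_ ?_ ?_ ?_ ?_ ?_
  · filter_upwards [nhdsWithin_le_nhds hf] with x hx
    simpa using ((hx.sub_const (f a)).sub (((hasDerivAt_id x).sub_const a).mul_const (f' a))).const_mul 2
  · exact Eventually.of_forall fun x => by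
      simpa using ((hasDerivAt_id x).sub_const a).fun_pow 2
  · filter_upwards [self_mem_nhdsWithin] with x hx
    exact mul_ne_zero two_ne_zero (sub_ne_zero.mpr hx)
  · have : ContinuousAt (fun x => 2 * (f x - f a - (x - a) * f' a)) a := by fun_prop
    simpa using this.tendsto.mono_left nhdsWithin_le_nhds
  · have : ContinuousAt (fun x : ℝ => (x - a) ^ 2) a := by fun_prop
    simpa using this.tendsto.mono_left nhdsWithin_le_nhds
  · exact hslope.congr fun x => (mul_div_mul_left _ _ two_ne_zero).symm

section ExpSum

variable {ι : Type*} (s : Finset ι) (w L : ι → ℝ)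

theorem hasDerivAt_sum_mul_exp (θ : ℝ) :
    HasDerivAt (fun t => ∑ i ∈ s, w i * exp (t * L i)) (∑ i ∈ s, w i * L i * exp (θ * L i)) θ :=
  HasDerivAt.fun_sum fun i _ =>
    ((((hasDerivAt_id' θ).mul_const (L i)).exp).const_mul (w i)).congr_deriv (by ring)

theorem tendsto_log_sum_mul_exp_sub_div_sq (hw : ∑ i ∈ s, w i = 1) :
    Tendsto (fun t => 2 * (log (∑ i ∈ s, w i * exp (t * L i)) - t * ∑ i ∈ s, w i * L i) / t ^ 2)
      (𝓝[≠] 0) (𝓝 (∑ i ∈ s, w i * L i ^ 2 - (∑ i ∈ s, w i * L i) ^ 2)) := by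
  set S := fun t => ∑ i ∈ s, w i * exp (t * L i)
  set S₁ := fun t => ∑ i ∈ s, w i * L i * exp (t * L i)
  set S₂ := fun t => ∑ i ∈ s, w i * L i * L i * exp (t * L i)
  have hS₀ : S 0 = 1 := by simpa [S] using hw
  have hS_ne : ∀ᶠ t in 𝓝 0, S t ≠ 0 := by
    refine (hasDerivAt_sum_mul_exp s w L 0).continuousAt.eventually_ne ?_
    simp [hw]
  have hlogS : ∀ᶠ t in 𝓝 0, HasDerivAt (fun t => log (S t)) (S₁ t / S t) t := by
    filter_upwards [hS_ne] with t ht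
    exact (hasDerivAt_sum_mul_exp s w L t).log ht
  have hS₁S : HasDerivAt (fun t => S₁ t / S t) ((S₂ 0 * S 0 - S₁ 0 * S₁ 0) / S 0 ^ 2) 0 :=
    (hasDerivAt_sum_mul_exp s (fun i => w i * L i) L 0).div (hasDerivAt_sum_mul_exp s w L 0)
      (hS₀ ▸ one_ne_zero)
  convert tendsto_two_mul_taylor_remainder_div_sq hlogS hS₁S using 2 with t
  · simp [S, S₁, hw]
  · simp [S₁, S₂, hS₀, pow_two, mul_assoc]

end ExpSum

section CondEntropy

variable {𝒳 𝒴 : Type*} [Fintype 𝒳] (P : 𝒳 × 𝒴 → ℝ)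

noncomputable def logCondProb (p : 𝒳 × 𝒴) : ℝ :=
  log (P p / margY P p.2)

theorem margY_pos {x : 𝒳} {y : 𝒴} (hP0 : ∀ p, 0 ≤ P p) (hxy : 0 < P (x, y)) : 0 < margY P y :=
  hxy.trans_le (Finset.single_le_sum (f := fun x => P (x, y)) (fun _ _ => hP0 _) (Finset.mem_univ x))

variable [Fintype 𝒴]

noncomputable def posSupport : Finset (𝒳 × 𝒴) :=
  Finset.univ.filter fun p => 0 < P p

theorem mem_posSupport {p : 𝒳 × 𝒴} : p ∈ posSupport P ↔ 0 < P p := by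
  simp [posSupport]

theorem sum_sum_ite_pos (f : 𝒳 × 𝒴 → ℝ) :
    (∑ x : 𝒳, ∑ y : 𝒴, if 0 < P (x, y) then f (x, y) else 0) = ∑ p ∈ posSupport P, f p := by
  rw [← Finset.sum_product', Finset.univ_product_univ, posSupport, Finset.sum_filter]

theorem sum_posSupport_eq_one (hP0 : ∀ p, 0 ≤ P p) (hP1 : ∑ p, P p = 1) :
    ∑ p ∈ posSupport P, P p = 1 := by
  rw [← hP1, posSupport, Finset.sum_filter]
  exact Finset.sum_congr rfl fun p _ => ite_eq_left_iff.mpr fun h => (le_antisymm (not_lt.mp h) (hP0 p)).symm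

theorem condEnt_eq_neg_sum : condEnt P = -∑ p ∈ posSupport P, P p * logCondProb P p :=
  congrArg Neg.neg (sum_sum_ite_pos P fun p => P p * logCondProb P p)

theorem condVarEnt_eq_sum :
    condVarEnt P = ∑ p ∈ posSupport P, P p * logCondProb P p ^ 2
      - (∑ p ∈ posSupport P, P p * logCondProb P p) ^ 2 := by
  rw [condVarEnt, condEnt_eq_neg_sum, neg_sq]
  exact congrArg (· - _) (sum_sum_ite_pos P fun p => P p * logCondProb P p ^ 2)

theorem condRenyiDown_eq_log_sum_exp (hP0 : ∀ p, 0 ≤ P p) (θ : ℝ) :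
    condRenyiDown P θ = -(1 / θ) * log (∑ p ∈ posSupport P, P p * exp (θ * logCondProb P p)) := by
  rw [condRenyiDown, sum_sum_ite_pos P fun p => P p ^ (1 + θ) * margY P p.2 ^ (-θ)]
  congr 2
  refine Finset.sum_congr rfl fun p hp => ?_
  have hp : 0 < P p := (mem_posSupport P).mp hp
  have hm : 0 < margY P p.2 := margY_pos P hP0 hp
  rw [rpow_add hp, rpow_one, rpow_neg hm.le, mul_assoc, ← div_eq_mul_inv, ← div_rpow hp.le hm.le,
    rpow_def_of_pos (div_pos hp hm), logCondProb, mul_comm θ]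

end CondEntropy

theorem lower_condRenyi_second_order {𝒳 𝒴 : Type*} [Fintype 𝒳] [Fintype 𝒴]
    (P : 𝒳 × 𝒴 → ℝ) (hP0 : ∀ p, 0 ≤ P p) (hP1 : ∑ p : 𝒳 × 𝒴, P p = 1) :
    Tendsto (fun θ : ℝ => 2 * (condEnt P - condRenyiDown P θ) / θ)
      (nhdsWithin 0 (Set.Ioo (-1 : ℝ) 0 ∪ Set.Ioi 0)) (nhds (condVarEnt P)) := by
  have hcgf := tendsto_log_sum_mul_exp_sub_div_sq (posSupport P) P (logCondProb P)
    (sum_posSupport_eq_one P hP0 hP1)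
  have hsub : Set.Ioo (-1 : ℝ) 0 ∪ Set.Ioi 0 ⊆ {0}ᶜ := by
    rintro θ (hθ | hθ)
    exacts [hθ.2.ne, hθ.ne']
  rw [condVarEnt_eq_sum]
  refine (hcgf.mono_left (nhdsWithin_mono 0 hsub)).congr' ?_
  filter_upwards [self_mem_nhdsWithin] with θ hθ
  rw [condRenyiDown_eq_log_sum_exp P hP0, condEnt_eq_neg_sum]
  have hθ0 : θ ≠ 0 := hsub hθ
  field_simp
  ring
end

section
/- Fix θ ∈ (−1,0)∪(0,∞). For every probability distribution Q_Y on 𝒴 whose support contains the support of P_Y, one has H_{1+θ}(P_XY|Q_Y) ≤ H↑_{1+θ}(X|Y), and equality holds for Q_Y = P_Y^{(1+θ)}; in particular max over such Q_Y of H_{1+θ}(P_XY|Q_Y) equals H_{1+θ}(P_XY|P_Y^{(1+θ)}) = −((1+θ)/θ) log Σ_y [Σ_x P_XY(x,y)^{1+θ}]^{1/(1+θ)}. -/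
open Real Filter

/-- Conditional Rényi entropy of order `1+θ` relative to `Q`. -/
noncomputable def condRenyiQ {𝒳 𝒴 : Type*} [Fintype 𝒳] [Fintype 𝒴]
    (P : 𝒳 × 𝒴 → ℝ) (Q : 𝒴 → ℝ) (θ : ℝ) : ℝ :=
  -(1 / θ) * Real.log (∑ x : 𝒳, ∑ y : 𝒴,
    if 0 < P (x, y) then P (x, y) ^ (1 + θ) * Q y ^ (-θ) else 0)

/-- Upper conditional Rényi entropy `H↑_{1+θ}(X|Y)`. -/
noncomputable def condRenyiUp {𝒳 𝒴 : Type*} [Fintype 𝒳] [Fintype 𝒴]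
    (P : 𝒳 × 𝒴 → ℝ) (θ : ℝ) : ℝ :=
  -((1 + θ) / θ) * Real.log (∑ y : 𝒴, (∑ x : 𝒳, P (x, y) ^ (1 + θ)) ^ (1 / (1 + θ)))

/-- The optimizing distribution `P_Y^{(1+θ)}`. -/
noncomputable def tiltY {𝒳 𝒴 : Type*} [Fintype 𝒳] [Fintype 𝒴]
    (P : 𝒳 × 𝒴 → ℝ) (θ : ℝ) (y : 𝒴) : ℝ :=
  (∑ x : 𝒳, P (x, y) ^ (1 + θ)) ^ (1 / (1 + θ))
    / ∑ y' : 𝒴, (∑ x : 𝒳, P (x, y') ^ (1 + θ)) ^ (1 / (1 + θ))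


/-!
Summing out `x`, both entropies are `-(1/θ) log` of a sum over `y`: with
`S y = rpowMargY P θ y = ∑ₓ P(x,y)^(1+θ)`, the first is built from `∑ S y * Q y^(-θ)` and the
second from `(∑ S y^(1/(1+θ)))^(1+θ)`. For `z y = S y^(1/(1+θ)) / Q y` these are
`∑ Q y * z y^(1+θ)` and `(∑ Q y * z y)^(1+θ)`, so Jensen's inequality for `t ↦ t^(1+θ)` (convex
for `θ > 0`, concave for `θ < 0`) compares them in the direction that the sign of `-(1/θ)` turns
into the claimed inequality. For `Q = P_Y^(1+θ)` the function `z` is constant, which gives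
equality.
-/

open Finset

noncomputable def rpowMargY {𝒳 𝒴 : Type*} [Fintype 𝒳] (P : 𝒳 × 𝒴 → ℝ) (θ : ℝ) (y : 𝒴) : ℝ :=
  ∑ x : 𝒳, P (x, y) ^ (1 + θ)

section Jensen

variable {θ s q : ℝ}

lemma eq_zero_of_pos_imp_pos (hsupp : 0 < s → 0 < q) (hs : 0 ≤ s) (hq : q = 0) : s = 0 :=
  (hs.eq_or_lt.resolve_right fun h => (hsupp h).ne' hq).symm

-- At `q = 0` these identities rely on `s = 0` (from `hsupp`) and on `0 / 0 = 0`.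
lemma mul_rpow_one_div_div (hsupp : 0 < s → 0 < q) (hs : 0 ≤ s) (hθ : 1 + θ ≠ 0) :
    q * (s ^ (1 / (1 + θ)) / q) = s ^ (1 / (1 + θ)) := by
  by_cases hq : q = 0
  · simp [hq, eq_zero_of_pos_imp_pos hsupp hs hq, zero_rpow (inv_ne_zero hθ)]
  · exact mul_div_cancel₀ _ hq

lemma mul_rpow_one_div_div_rpow (hsupp : 0 < s → 0 < q) (hs : 0 ≤ s) (hq : 0 ≤ q)
    (hθ : 1 + θ ≠ 0) :
    q * (s ^ (1 / (1 + θ)) / q) ^ (1 + θ) = s * q ^ (-θ) := by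
  rcases hq.eq_or_lt with rfl | hq
  · simp [eq_zero_of_pos_imp_pos hsupp hs rfl, zero_rpow hθ]
  · rw [div_rpow (rpow_nonneg hs _) hq.le, ← rpow_mul hs, one_div_mul_cancel hθ, rpow_one,
      show -θ = 1 - (1 + θ) by ring, rpow_sub hq, rpow_one]
    ring

lemma mul_rpow_one_div_div_rpow_neg {b : ℝ} (hs : 0 ≤ s) (hb : 0 < b) (hθ : 1 + θ ≠ 0) :
    s * (s ^ (1 / (1 + θ)) / b) ^ (-θ) = s ^ (1 / (1 + θ)) * b ^ θ := by
  rcases hs.eq_or_lt with rfl | hs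
  · simp [zero_rpow (inv_ne_zero hθ)]
  · rw [div_rpow (rpow_nonneg hs.le _) hb.le, ← rpow_mul hs.le, rpow_neg hb.le, div_inv_eq_mul,
      ← mul_assoc]
    congr 1
    nth_rw 1 [← rpow_one s]
    rw [← rpow_add hs]
    congr 1
    field_simp
    ring

variable {ι : Type*} [Fintype ι] {S Q : ι → ℝ}

lemma sum_mul_rpow_one_div_div (hS : ∀ i, 0 ≤ S i) (hsupp : ∀ i, 0 < S i → 0 < Q i)
    (hθ : 1 + θ ≠ 0) :
    ∑ i, Q i * (S i ^ (1 / (1 + θ)) / Q i) = ∑ i, S i ^ (1 / (1 + θ)) :=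
  sum_congr rfl fun i _ => mul_rpow_one_div_div (hsupp i) (hS i) hθ

lemma sum_mul_rpow_one_div_div_rpow (hS : ∀ i, 0 ≤ S i) (hQ : ∀ i, 0 ≤ Q i)
    (hsupp : ∀ i, 0 < S i → 0 < Q i) (hθ : 1 + θ ≠ 0) :
    ∑ i, Q i * (S i ^ (1 / (1 + θ)) / Q i) ^ (1 + θ) = ∑ i, S i * Q i ^ (-θ) :=
  sum_congr rfl fun i _ => mul_rpow_one_div_div_rpow (hsupp i) (hS i) (hQ i) hθ

theorem rpow_sum_rpow_one_div_le_sum_mul_rpow_neg (hθ : 0 ≤ θ) (hS : ∀ i, 0 ≤ S i)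
    (hQ : ∀ i, 0 ≤ Q i) (hQ1 : ∑ i, Q i = 1) (hsupp : ∀ i, 0 < S i → 0 < Q i) :
    (∑ i, S i ^ (1 / (1 + θ))) ^ (1 + θ) ≤ ∑ i, S i * Q i ^ (-θ) := by
  have hθ' : 1 + θ ≠ 0 := by positivity
  rw [← sum_mul_rpow_one_div_div hS hsupp hθ', ← sum_mul_rpow_one_div_div_rpow hS hQ hsupp hθ']
  exact rpow_arith_mean_le_arith_mean_rpow univ Q _ (fun i _ => hQ i) hQ1
    (fun i _ => div_nonneg (rpow_nonneg (hS i) _) (hQ i)) (by linarith)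

theorem sum_mul_rpow_neg_le_rpow_sum_rpow_one_div (hθ : θ ∈ Set.Ioc (-1) 0)
    (hS : ∀ i, 0 ≤ S i) (hQ : ∀ i, 0 ≤ Q i) (hQ1 : ∑ i, Q i = 1)
    (hsupp : ∀ i, 0 < S i → 0 < Q i) :
    ∑ i, S i * Q i ^ (-θ) ≤ (∑ i, S i ^ (1 / (1 + θ))) ^ (1 + θ) := by
  have hθ' : 1 + θ ≠ 0 := by linarith [hθ.1]
  rw [← sum_mul_rpow_one_div_div hS hsupp hθ', ← sum_mul_rpow_one_div_div_rpow hS hQ hsupp hθ']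
  simpa only [smul_eq_mul] using
    (concaveOn_rpow (by linarith [hθ.1]) (by linarith [hθ.2])).le_map_sum (fun i _ => hQ i) hQ1
      fun i _ => Set.mem_Ici.2 (div_nonneg (rpow_nonneg (hS i) _) (hQ i))

lemma sum_mul_rpow_div_sum_rpow_neg (hS : ∀ i, 0 ≤ S i) (hθ : 1 + θ ≠ 0)
    (hB : 0 < ∑ i, S i ^ (1 / (1 + θ))) :
    ∑ i, S i * (S i ^ (1 / (1 + θ)) / ∑ j, S j ^ (1 / (1 + θ))) ^ (-θ)
      = (∑ i, S i ^ (1 / (1 + θ))) ^ (1 + θ) := by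
  rw [sum_congr rfl fun i _ => mul_rpow_one_div_div_rpow_neg (hS i) hB hθ, ← sum_mul,
    rpow_add hB, rpow_one]

end Jensen

section Entropy

variable {𝒳 𝒴 : Type*} [Fintype 𝒳] {P : 𝒳 × 𝒴 → ℝ} {θ : ℝ}

lemma rpowMargY_nonneg (hP0 : ∀ p, 0 ≤ P p) (y : 𝒴) : 0 ≤ rpowMargY P θ y :=
  sum_nonneg fun x _ => rpow_nonneg (hP0 (x, y)) _

lemma margY_pos_of_rpowMargY_pos (hP0 : ∀ p, 0 ≤ P p) (hθ : 1 + θ ≠ 0) {y : 𝒴}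
    (h : 0 < rpowMargY P θ y) : 0 < margY P y := by
  refine (sum_nonneg fun x _ => hP0 (x, y)).lt_of_ne fun h0 => h.ne' ?_
  have hzero := (sum_eq_zero_iff_of_nonneg fun x _ => hP0 (x, y)).1 h0.symm
  simp [rpowMargY, hzero, zero_rpow hθ]

lemma exists_rpowMargY_pos [Fintype 𝒴] (hP0 : ∀ p, 0 ≤ P p) (hP1 : ∑ p : 𝒳 × 𝒴, P p = 1) :
    ∃ y, 0 < rpowMargY P θ y := by
  obtain ⟨⟨x, y⟩, -, hxy⟩ :=
    exists_lt_of_sum_lt (by simp [hP1] : ∑ _p : 𝒳 × 𝒴, (0 : ℝ) < ∑ p, P p)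
  exact ⟨y, (rpow_pos_of_pos hxy _).trans_le <| single_le_sum
    (f := fun x => P (x, y) ^ (1 + θ)) (fun x _ => rpow_nonneg (hP0 _) _) (mem_univ x)⟩

lemma sum_rpowMargY_rpow_pos [Fintype 𝒴] (hP0 : ∀ p, 0 ≤ P p)
    (hpos : ∃ y, 0 < rpowMargY P θ y) :
    0 < ∑ y, rpowMargY P θ y ^ (1 / (1 + θ)) := by
  obtain ⟨y, hy⟩ := hpos
  exact sum_pos' (fun y _ => rpow_nonneg (rpowMargY_nonneg hP0 y) _)
    ⟨y, mem_univ y, rpow_pos_of_pos hy _⟩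

lemma condRenyiQ_eq [Fintype 𝒴] (hP0 : ∀ p, 0 ≤ P p) (hθ : 1 + θ ≠ 0) (Q : 𝒴 → ℝ) :
    condRenyiQ P Q θ = -(1 / θ) * log (∑ y, rpowMargY P θ y * Q y ^ (-θ)) := by
  unfold condRenyiQ rpowMargY
  congr 2
  rw [sum_comm]
  refine sum_congr rfl fun y _ => ?_
  rw [sum_mul]
  refine sum_congr rfl fun x _ => ?_
  rcases (hP0 (x, y)).eq_or_lt with h | h
  · simp [← h, zero_rpow hθ]
  · simp [h]

lemma condRenyiUp_eq [Fintype 𝒴] (hB : 0 < ∑ y, rpowMargY P θ y ^ (1 / (1 + θ))) :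
    condRenyiUp P θ = -(1 / θ) * log ((∑ y, rpowMargY P θ y ^ (1 / (1 + θ))) ^ (1 + θ)) := by
  rw [log_rpow hB]
  unfold condRenyiUp rpowMargY
  ring

theorem condRenyiQ_le_condRenyiUp_of_pos [Fintype 𝒴] (hP0 : ∀ p, 0 ≤ P p) (hθ : 0 < θ)
    (hpos : ∃ y, 0 < rpowMargY P θ y) {Q : 𝒴 → ℝ} (hQ0 : ∀ y, 0 ≤ Q y) (hQ1 : ∑ y, Q y = 1)
    (hsupp : ∀ y, 0 < rpowMargY P θ y → 0 < Q y) :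
    condRenyiQ P Q θ ≤ condRenyiUp P θ := by
  have hB := sum_rpowMargY_rpow_pos hP0 hpos
  rw [condRenyiQ_eq hP0 (by positivity), condRenyiUp_eq hB]
  refine mul_le_mul_of_nonpos_left (log_le_log (by positivity) ?_) (by simpa using hθ.le)
  exact rpow_sum_rpow_one_div_le_sum_mul_rpow_neg hθ.le (rpowMargY_nonneg hP0) hQ0 hQ1 hsupp

theorem condRenyiQ_le_condRenyiUp_of_neg [Fintype 𝒴] (hP0 : ∀ p, 0 ≤ P p)
    (hθ : θ ∈ Set.Ioo (-1) 0)
    (hpos : ∃ y, 0 < rpowMargY P θ y) {Q : 𝒴 → ℝ} (hQ0 : ∀ y, 0 ≤ Q y) (hQ1 : ∑ y, Q y = 1)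
    (hsupp : ∀ y, 0 < rpowMargY P θ y → 0 < Q y) :
    condRenyiQ P Q θ ≤ condRenyiUp P θ := by
  obtain ⟨y, hy⟩ := hpos
  have hA : 0 < ∑ y, rpowMargY P θ y * Q y ^ (-θ) :=
    sum_pos' (fun y _ => mul_nonneg (rpowMargY_nonneg hP0 y) (rpow_nonneg (hQ0 y) _))
      ⟨y, mem_univ y, mul_pos hy (rpow_pos_of_pos (hsupp y hy) _)⟩
  rw [condRenyiQ_eq hP0 (by linarith [hθ.1]),
    condRenyiUp_eq (sum_rpowMargY_rpow_pos hP0 ⟨y, hy⟩)]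
  refine mul_le_mul_of_nonneg_left (log_le_log hA ?_) (by simpa using hθ.2.le)
  exact sum_mul_rpow_neg_le_rpow_sum_rpow_one_div (Set.Ioo_subset_Ioc_self hθ)
    (rpowMargY_nonneg hP0) hQ0 hQ1 hsupp

theorem condRenyiQ_tiltY [Fintype 𝒴] (hP0 : ∀ p, 0 ≤ P p) (hθ : 0 < 1 + θ)
    (hpos : ∃ y, 0 < rpowMargY P θ y) :
    condRenyiQ P (tiltY P θ) θ = condRenyiUp P θ := by
  have hB := sum_rpowMargY_rpow_pos hP0 hpos
  rw [condRenyiQ_eq hP0 hθ.ne', condRenyiUp_eq hB]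
  exact congrArg _ (congrArg log
    (sum_mul_rpow_div_sum_rpow_neg (rpowMargY_nonneg hP0) hθ.ne' hB))

end Entropy

theorem condRenyiQ_le_condRenyiUp_and_eq {𝒳 𝒴 : Type*} [Fintype 𝒳] [Fintype 𝒴]
    (P : 𝒳 × 𝒴 → ℝ) (hP0 : ∀ p, 0 ≤ P p) (hP1 : ∑ p : 𝒳 × 𝒴, P p = 1)
    (θ : ℝ) (hθ : θ ∈ Set.Ioo (-1 : ℝ) 0 ∪ Set.Ioi 0) :
    (∀ Q : 𝒴 → ℝ, (∀ y, 0 ≤ Q y) → (∑ y : 𝒴, Q y = 1) →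
      (∀ y, 0 < margY P y → 0 < Q y) →
      condRenyiQ P Q θ ≤ condRenyiUp P θ)
    ∧ condRenyiQ P (tiltY P θ) θ = condRenyiUp P θ := by
  have hθ1 : 0 < 1 + θ := by
    rcases hθ with hθ | hθ
    · linarith [hθ.1]
    · linarith [Set.mem_Ioi.1 hθ]
  have hpos := exists_rpowMargY_pos (θ := θ) hP0 hP1
  refine ⟨fun Q hQ0 hQ1 hQs => ?_, condRenyiQ_tiltY hP0 hθ1 hpos⟩
  have hsupp y (hy : 0 < rpowMargY P θ y) : 0 < Q y :=
    hQs y (margY_pos_of_rpowMargY_pos hP0 hθ1.ne' hy)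
  rcases hθ with hneg | hpos'
  · exact condRenyiQ_le_condRenyiUp_of_neg hP0 hneg hpos hQ0 hQ1 hsupp
  · exact condRenyiQ_le_condRenyiUp_of_pos hP0 hpos' hpos hQ0 hQ1 hsupp
end

section
/- For every probability distribution P_XY on 𝒳×𝒴, the upper conditional Rényi entropy converges to the conditional entropy as the order parameter tends to 0: lim_{θ→0} H↑_{1+θ}(X|Y) = H(X|Y). -/
open Real Filter

/-! Write `G θ = ∑ y, ‖P(·, y)‖_{1+θ}`, so that
`H↑_{1+θ}(X|Y) = -(1 + θ) · (log G θ - log G 0) / θ` with `G 0 = 1`. The limit is therefore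
`-(log G)'(0) = -G'(0)`, and differentiating each `ℓ^{1+θ}`-norm at `θ = 0` gives
`∑ₓ p log p - m log m` with `m` the column mass, whose sum over `y` is `-H(X|Y)`. -/

open Topology

lemma hasDerivAt_rpow_one_add {a : ℝ} (ha : 0 ≤ a) :
    HasDerivAt (fun θ : ℝ => a ^ (1 + θ)) (a * log a) 0 := by
  rcases ha.eq_or_lt with rfl | ha
  · refine ((hasDerivAt_const (0 : ℝ) (0 : ℝ)).congr_of_eventuallyEq ?_).congr_deriv
      (by simp)
    filter_upwards [eventually_ne_nhds (show (0 : ℝ) ≠ -1 by norm_num)] with θ hθ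
    exact zero_rpow (by contrapose! hθ; linarith)
  · simpa [mul_comm] using ((hasDerivAt_id (0 : ℝ)).const_add 1).const_rpow ha

lemma hasDerivAt_sum_rpow_one_add_rpow_one_div {ι : Type*} [Fintype ι] {a : ι → ℝ}
    (ha : ∀ i, 0 ≤ a i) :
    HasDerivAt (fun θ : ℝ => (∑ i, a i ^ (1 + θ)) ^ (1 / (1 + θ)))
      (∑ i, a i * log (a i) - (∑ i, a i) * log (∑ i, a i)) 0 := by
  rcases (Finset.sum_nonneg fun i _ => ha i).eq_or_lt with hzero | hpos
  · obtain rfl : a = 0 := funext fun i =>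
      (Finset.sum_eq_zero_iff_of_nonneg fun i _ => ha i).mp hzero.symm i (Finset.mem_univ i)
    refine ((hasDerivAt_const (0 : ℝ) (0 : ℝ)).congr_of_eventuallyEq ?_).congr_deriv
      (by simp)
    filter_upwards [eventually_ne_nhds (show (0 : ℝ) ≠ -1 by norm_num)] with θ hθ
    have h1 : 1 + θ ≠ 0 := by contrapose! hθ; linarith
    simp [zero_rpow h1, h1]
  · have hsum : HasDerivAt (fun θ : ℝ => ∑ i, a i ^ (1 + θ)) (∑ i, a i * log (a i)) 0 :=
      HasDerivAt.fun_sum fun i _ => hasDerivAt_rpow_one_add (ha i)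
    have hexp : HasDerivAt (fun θ : ℝ => 1 / (1 + θ)) (-1) 0 := by
      simpa [one_div] using
        ((hasDerivAt_id (0 : ℝ)).const_add 1).fun_inv (by norm_num)
    convert hsum.rpow hexp (by simpa using hpos) using 1
    simp only [add_zero, div_self one_ne_zero, mul_one, rpow_one, sub_self, rpow_zero]
    ring

lemma sum_mul_log_div_sum {ι : Type*} [Fintype ι] {a : ι → ℝ} (ha : ∀ i, 0 ≤ a i) :
    ∑ i, a i * log (a i / ∑ j, a j) =
      ∑ i, a i * log (a i) - (∑ i, a i) * log (∑ i, a i) := by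
  rw [Finset.sum_mul, ← Finset.sum_sub_distrib]
  refine Finset.sum_congr rfl fun i _ => ?_
  rcases (ha i).eq_or_lt with h | h
  · simp [← h]
  · have hsum : 0 < ∑ j, a j :=
      h.trans_le (Finset.single_le_sum (fun j _ => ha j) (Finset.mem_univ i))
    rw [log_div h.ne' hsum.ne', mul_sub]

lemma condEnt_eq_neg_sum_s3 {𝒳 𝒴 : Type*} [Fintype 𝒳] [Fintype 𝒴] {P : 𝒳 × 𝒴 → ℝ}
    (hP0 : ∀ p, 0 ≤ P p) :
    condEnt P =
      -∑ y, (∑ x, P (x, y) * log (P (x, y)) - margY P y * log (margY P y)) := by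
  rw [condEnt, Finset.sum_comm]
  congr 1
  refine Finset.sum_congr rfl fun y _ => ?_
  rw [margY, ← sum_mul_log_div_sum fun x => hP0 (x, y)]
  refine Finset.sum_congr rfl fun x _ => ?_
  rw [ite_eq_left_iff, not_lt]
  intro h
  simp [le_antisymm h (hP0 _)]

lemma tendsto_neg_one_add_div_mul {f : ℝ → ℝ} {d : ℝ} (hf : HasDerivAt f d 0)
    (hf0 : f 0 = 0) :
    Tendsto (fun θ => -((1 + θ) / θ) * f θ) (𝓝[≠] 0) (𝓝 (-d)) := by
  have hcoef : Tendsto (fun θ : ℝ => -(1 + θ)) (𝓝[≠] 0) (𝓝 (-1)) :=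
    ((by fun_prop : Continuous fun θ : ℝ => -(1 + θ)).tendsto' 0 (-1) (by norm_num))
      |>.mono_left nhdsWithin_le_nhds
  convert hcoef.mul (hasDerivAt_iff_tendsto_slope.mp hf) using 2 with θ
  · rw [slope_def_field, hf0]; ring
  · ring

theorem upper_condRenyi_tendsto_condEnt {𝒳 𝒴 : Type*} [Fintype 𝒳] [Fintype 𝒴]
    (P : 𝒳 × 𝒴 → ℝ) (hP0 : ∀ p, 0 ≤ P p) (hP1 : ∑ p : 𝒳 × 𝒴, P p = 1) :
    Tendsto (fun θ : ℝ => condRenyiUp P θ)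
      (nhdsWithin 0 (Set.Ioo (-1 : ℝ) 0 ∪ Set.Ioi 0)) (nhds (condEnt P)) := by
  have hG : HasDerivAt (fun θ : ℝ => ∑ y, (∑ x, P (x, y) ^ (1 + θ)) ^ (1 / (1 + θ)))
      (-condEnt P) 0 := by
    rw [condEnt_eq_neg_sum_s3 hP0, neg_neg]
    exact HasDerivAt.fun_sum fun y _ =>
      hasDerivAt_sum_rpow_one_add_rpow_one_div fun x => hP0 (x, y)
  have hG0 : ∑ y, (∑ x, P (x, y) ^ (1 + (0 : ℝ))) ^ (1 / (1 + (0 : ℝ))) = 1 := by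
    simpa [Fintype.sum_prod_type_right] using hP1
  have hlog := hG.log (by rw [hG0]; exact one_ne_zero)
  rw [hG0, div_one] at hlog
  have hlim := tendsto_neg_one_add_div_mul hlog (by simp only [hG0, log_one])
  rw [neg_neg] at hlim
  refine hlim.mono_left (nhdsWithin_mono 0 ?_)
  rintro θ (⟨-, hθ⟩ | hθ)
  exacts [hθ.ne, hθ.ne']
end

section
/- For every probability distribution P_XY on 𝒳×𝒴, lim_{θ→0} 2[H(X|Y) − H↑_{1+θ}(X|Y)]/θ = V(X|Y). -/
open Real Filter

/-!
Write `Ψ(p) = ∑_y ‖P(·, y)‖_p`. By definition `θ · H↑_{1+θ}(X|Y) = -(1 + θ) log Ψ(1 + θ)`, so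
`2 (H - H↑_{1+θ}) / θ = 2 f(1 + θ) / θ²` with `f(p) = p log Ψ(p) + H (p - 1)`.
Differentiating `‖a‖_p = exp (log (∑ₓ aₓ ^ p) / p)` column by column gives `Ψ(1) = 1`,
`Ψ'(1) = -H` and `Ψ''(1) = V + H² + 2H`; hence `f(1) = f'(1) = 0` and `f''(1) = V`,
and l'Hôpital's rule turns this into the limit.
-/

open Topology

theorem tendsto_two_mul_div_sq_of_hasDerivAt {f f' : ℝ → ℝ} {a c : ℝ}
    (hf : ∀ᶠ x in 𝓝 a, HasDerivAt f (f' x) x) (hfa : f a = 0) (hf'a : f' a = 0)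
    (hf' : HasDerivAt f' c a) :
    Tendsto (fun x => 2 * f x / (x - a) ^ 2) (𝓝[≠] a) (𝓝 c) := by
  have hg (x : ℝ) : HasDerivAt (fun x => (x - a) ^ 2 / 2) (x - a) x := by
    simpa using (((hasDerivAt_id x).sub_const a).fun_pow 2).div_const 2
  have hlim : Tendsto (fun x => f x / ((x - a) ^ 2 / 2)) (𝓝[≠] a) (𝓝 c) := by
    refine HasDerivAt.lhopital_zero_nhdsNE (hf.filter_mono nhdsWithin_le_nhds) (.of_forall hg)
      ?_ ?_ ?_ ?_
    · filter_upwards [self_mem_nhdsWithin] with x hx using sub_ne_zero.2 hx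
    · simpa [hfa] using hf.self_of_nhds.continuousAt.tendsto.mono_left nhdsWithin_le_nhds
    · simpa using (hg a).continuousAt.tendsto.mono_left nhdsWithin_le_nhds
    · refine (hasDerivAt_iff_tendsto_slope.1 hf').congr' (.of_forall fun x => ?_)
      rw [slope_def_field, hf'a, sub_zero]
  simpa only [div_div_eq_mul_div, mul_comm] using hlim

theorem tendsto_mul_log_div_sq {Ψ Ψ' : ℝ → ℝ} {H V : ℝ}
    (hΨ : ∀ᶠ p in 𝓝 1, HasDerivAt Ψ (Ψ' p) p) (hΨ1 : Ψ 1 = 1) (hΨ'1 : Ψ' 1 = -H)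
    (hΨ' : HasDerivAt Ψ' (V + H ^ 2 + 2 * H) 1) :
    Tendsto (fun p => 2 * (p * log (Ψ p) + H * (p - 1)) / (p - 1) ^ 2) (𝓝[≠] 1) (𝓝 V) := by
  have hΨ₁ := hΨ.self_of_nhds
  have hpos : ∀ᶠ p in 𝓝 1, 0 < Ψ p :=
    hΨ₁.continuousAt.eventually (lt_mem_nhds (by rw [hΨ1]; exact one_pos))
  refine tendsto_two_mul_div_sq_of_hasDerivAt
    (f' := fun p => log (Ψ p) + p * (Ψ' p / Ψ p) + H) ?_ (by simp [hΨ1]) (by simp [hΨ1, hΨ'1]) ?_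
  · filter_upwards [hΨ, hpos] with p hd hp
    refine (((hasDerivAt_id' p).fun_mul (hd.log hp.ne')).fun_add
      (((hasDerivAt_id' p).sub_const 1).const_mul H)).congr_deriv ?_
    field_simp
  · refine (((hΨ₁.log (by simp [hΨ1])).fun_add ((hasDerivAt_id' 1).fun_mul
      (hΨ'.fun_div hΨ₁ (by simp [hΨ1])))).add_const H).congr_deriv ?_
    rw [hΨ1, hΨ'1]
    ring

theorem hasDerivAt_const_rpow_of_nonneg {a p : ℝ} (ha : 0 ≤ a) (hp : p ≠ 0) :
    HasDerivAt (fun q => a ^ q) (a ^ p * log a) p := by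
  rcases ha.eq_or_lt with rfl | ha
  · -- `0 ^ q = 0` for `q ≠ 0`, and `log 0 = 0`
    have : (fun q : ℝ => (0 : ℝ) ^ q) =ᶠ[𝓝 p] fun _ => 0 := by
      filter_upwards [isOpen_ne.mem_nhds hp] with q hq using zero_rpow hq
    simpa using (hasDerivAt_const p (0 : ℝ)).congr_of_eventuallyEq this
  · exact (hasStrictDerivAt_const_rpow ha p).hasDerivAt

theorem mul_log_div_eq_sub {a m : ℝ} (hm : m ≠ 0) : a * log (a / m) = a * log a - a * log m := by
  rcases eq_or_ne a 0 with rfl | ha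
  · simp
  · rw [log_div ha hm, mul_sub]

theorem ite_pos_mul_eq {q r : ℝ} (hq : 0 ≤ q) : (if 0 < q then q * r else 0) = q * r := by
  split_ifs with h
  · rfl
  · rw [le_antisymm (not_lt.1 h) hq, zero_mul]

namespace CondRenyi

variable {ι : Type*} [Fintype ι] {a : ι → ℝ}

noncomputable def lpNorm (a : ι → ℝ) (p : ℝ) : ℝ := (∑ i, a i ^ p) ^ (1 / p)

/-- `d/dp ‖a‖_p`, obtained by differentiating `‖a‖_p = exp (log (∑ i, a i ^ p) / p)`. -/
noncomputable def lpNormDeriv (a : ι → ℝ) (p : ℝ) : ℝ :=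
  lpNorm a p * ((∑ i, a i ^ p * log (a i)) / (∑ i, a i ^ p) - log (∑ i, a i ^ p) / p) / p

theorem lpNorm_one (a : ι → ℝ) : lpNorm a 1 = ∑ i, a i := by
  simp [lpNorm]

theorem lpNorm_eq_zero (ha : ∀ i, a i = 0) {p : ℝ} (hp : p ≠ 0) : lpNorm a p = 0 := by
  simp [lpNorm, ha, zero_rpow hp, hp]

theorem hasDerivAt_sum_rpow_mul (ha : ∀ i, 0 ≤ a i) (c : ι → ℝ) {p : ℝ} (hp : p ≠ 0) :
    HasDerivAt (fun q => ∑ i, a i ^ q * c i) (∑ i, a i ^ p * log (a i) * c i) p :=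
  HasDerivAt.fun_sum fun i _ => (hasDerivAt_const_rpow_of_nonneg (ha i) hp).mul_const (c i)

theorem sum_rpow_pos (ha : ∀ i, 0 ≤ a i) {i : ι} (hi : 0 < a i) (p : ℝ) : 0 < ∑ j, a j ^ p :=
  (rpow_pos_of_pos hi p).trans_le
    (Finset.single_le_sum (fun j _ => rpow_nonneg (ha j) p) (Finset.mem_univ i))

theorem lpNorm_eq_exp (ha : ∀ i, 0 ≤ a i) {i : ι} (hi : 0 < a i) :
    lpNorm a = fun q => exp (log (∑ j, a j ^ q) / q) :=
  funext fun q => by rw [lpNorm, rpow_def_of_pos (sum_rpow_pos ha hi q), mul_one_div]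

theorem hasDerivAt_log_sum_rpow_div (ha : ∀ i, 0 ≤ a i) {i : ι} (hi : 0 < a i) {p : ℝ}
    (hp : p ≠ 0) :
    HasDerivAt (fun q => log (∑ j, a j ^ q) / q)
      (((∑ j, a j ^ p * log (a j)) / (∑ j, a j ^ p) - log (∑ j, a j ^ p) / p) / p) p := by
  have hM : HasDerivAt (fun q => ∑ j, a j ^ q) (∑ j, a j ^ p * log (a j)) p := by
    simpa using hasDerivAt_sum_rpow_mul ha 1 hp
  refine ((hM.log (sum_rpow_pos ha hi p).ne').fun_div (hasDerivAt_id' p) hp).congr_deriv ?_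
  field_simp

theorem hasDerivAt_lpNorm (ha : ∀ i, 0 ≤ a i) {p : ℝ} (hp : 0 < p) :
    HasDerivAt (lpNorm a) (lpNormDeriv a p) p := by
  by_cases h0 : ∀ i, a i = 0
  · have : lpNorm a =ᶠ[𝓝 p] fun _ => 0 := by
      filter_upwards [Ioi_mem_nhds hp] with q hq using lpNorm_eq_zero h0 (ne_of_gt hq)
    rw [lpNormDeriv, lpNorm_eq_zero h0 hp.ne', zero_mul, zero_div]
    exact (hasDerivAt_const p 0).congr_of_eventuallyEq this
  · obtain ⟨i, hi⟩ : ∃ i, 0 < a i := by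
      push Not at h0
      exact h0.imp fun i hi => (ha i).lt_of_ne' hi
    rw [lpNormDeriv, lpNorm_eq_exp ha hi, mul_div_assoc]
    exact (hasDerivAt_log_sum_rpow_div ha hi hp.ne').exp

theorem sum_mul_log_div (hm : ∑ j, a j ≠ 0) :
    ∑ i, a i * log (a i / ∑ j, a j) = ∑ i, a i * log (a i) - (∑ j, a j) * log (∑ j, a j) := by
  simp_rw [mul_log_div_eq_sub hm, Finset.sum_sub_distrib, Finset.sum_mul]

theorem sum_mul_log_div_sq (hm : ∑ j, a j ≠ 0) :
    ∑ i, a i * log (a i / ∑ j, a j) ^ 2 = ∑ i, a i * log (a i) * log (a i)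
      - 2 * (∑ i, a i * log (a i)) * log (∑ j, a j) + (∑ j, a j) * log (∑ j, a j) ^ 2 := by
  have (i : ι) : a i * log (a i / ∑ j, a j) ^ 2 = a i * log (a i) * log (a i)
      - 2 * (a i * log (a i)) * log (∑ j, a j) + a i * log (∑ j, a j) ^ 2 := by
    rcases eq_or_ne (a i) 0 with h | h
    · simp [h]
    · rw [log_div h hm]
      ring
  simp_rw [this, Finset.sum_add_distrib, Finset.sum_sub_distrib, ← Finset.sum_mul, ← Finset.mul_sum]

theorem lpNormDeriv_one (a : ι → ℝ) :
    lpNormDeriv a 1 = ∑ i, a i * log (a i / ∑ j, a j) := by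
  rcases eq_or_ne (∑ j, a j) 0 with hm | hm
  · -- both sides vanish, the right one through `a i / 0 = 0` and `log 0 = 0`
    simp [lpNormDeriv, lpNorm_one, hm]
  · rw [sum_mul_log_div hm, lpNormDeriv, lpNorm_one]
    simp only [rpow_one, div_one]
    rw [mul_sub, mul_div_cancel₀ _ hm]

theorem hasDerivAt_lpNormDeriv_one (ha : ∀ i, 0 ≤ a i) :
    HasDerivAt (lpNormDeriv a)
      (∑ i, a i * log (a i / ∑ j, a j) ^ 2 - 2 * ∑ i, a i * log (a i / ∑ j, a j)) 1 := by
  by_cases h0 : ∀ i, a i = 0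
  · have : lpNormDeriv a =ᶠ[𝓝 1] fun _ => 0 := by
      filter_upwards [Ioi_mem_nhds one_pos] with q hq
      rw [lpNormDeriv, lpNorm_eq_zero h0 (ne_of_gt hq), zero_mul, zero_div]
    simpa [h0] using (hasDerivAt_const (1 : ℝ) (0 : ℝ)).congr_of_eventuallyEq this
  obtain ⟨i, hi⟩ : ∃ i, 0 < a i := by
    push Not at h0
    exact h0.imp fun i hi => (ha i).lt_of_ne' hi
  have hm : 0 < ∑ j, a j := (sum_rpow_pos ha hi 1).trans_eq (by simp)
  set ℓ : ℝ → ℝ := fun q => log (∑ j, a j ^ q) / q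
  set K : ℝ → ℝ := fun q => (∑ j, a j ^ q * log (a j)) / (∑ j, a j ^ q)
  have hN : lpNormDeriv a = fun q => exp (ℓ q) * ((K q - ℓ q) / q) := by
    funext q
    rw [lpNormDeriv, lpNorm_eq_exp ha hi, mul_div_assoc]
  have hℓ := hasDerivAt_log_sum_rpow_div ha hi one_ne_zero
  have hM := hasDerivAt_sum_rpow_mul ha 1 one_ne_zero
  have hM₁ := hasDerivAt_sum_rpow_mul ha (fun j => log (a j)) one_ne_zero
  simp only [Pi.one_apply, mul_one] at hM
  have hK : HasDerivAt K _ 1 := hM₁.fun_div hM (sum_rpow_pos ha hi 1).ne'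
  rw [hN]
  refine (hℓ.exp.fun_mul ((hK.fun_sub hℓ).fun_div (hasDerivAt_id' 1) one_ne_zero)).congr_deriv ?_
  rw [sum_mul_log_div_sq hm.ne', sum_mul_log_div hm.ne']
  simp only [K, rpow_one, div_one, exp_log hm]
  field_simp
  ring

section Joint

variable {𝒳 𝒴 : Type*} [Fintype 𝒳] [Fintype 𝒴] {P : 𝒳 × 𝒴 → ℝ}

noncomputable def condNormSum (P : 𝒳 × 𝒴 → ℝ) (p : ℝ) : ℝ :=
  ∑ y, lpNorm (fun x => P (x, y)) p

theorem condNormSum_one (hP1 : ∑ p : 𝒳 × 𝒴, P p = 1) : condNormSum P 1 = 1 := by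
  simp only [condNormSum, lpNorm_one]
  rw [← hP1, Fintype.sum_prod_type, Finset.sum_comm]

theorem hasDerivAt_condNormSum (hP0 : ∀ p, 0 ≤ P p) {p : ℝ} (hp : 0 < p) :
    HasDerivAt (condNormSum P) (∑ y, lpNormDeriv (fun x => P (x, y)) p) p :=
  HasDerivAt.fun_sum fun y _ => hasDerivAt_lpNorm (fun x => hP0 (x, y)) hp

theorem condEnt_eq (hP0 : ∀ p, 0 ≤ P p) :
    condEnt P = -∑ y, ∑ x, P (x, y) * log (P (x, y) / margY P y) := by
  simp only [condEnt, ite_pos_mul_eq (hP0 _)]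
  rw [Finset.sum_comm]

theorem condVarEnt_eq (hP0 : ∀ p, 0 ≤ P p) :
    condVarEnt P = ∑ y, ∑ x, P (x, y) * log (P (x, y) / margY P y) ^ 2 - condEnt P ^ 2 := by
  simp only [condVarEnt, ite_pos_mul_eq (hP0 _)]
  rw [Finset.sum_comm]

theorem sum_lpNormDeriv_one (hP0 : ∀ p, 0 ≤ P p) :
    ∑ y, lpNormDeriv (fun x => P (x, y)) 1 = -condEnt P := by
  simp only [lpNormDeriv_one, condEnt_eq hP0, neg_neg, margY]

theorem hasDerivAt_sum_lpNormDeriv_one (hP0 : ∀ p, 0 ≤ P p) :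
    HasDerivAt (fun p => ∑ y, lpNormDeriv (fun x => P (x, y)) p)
      (condVarEnt P + condEnt P ^ 2 + 2 * condEnt P) 1 := by
  refine (HasDerivAt.fun_sum fun y _ =>
    hasDerivAt_lpNormDeriv_one fun x => hP0 (x, y)).congr_deriv ?_
  rw [Finset.sum_sub_distrib, ← Finset.mul_sum, condVarEnt_eq hP0, condEnt_eq hP0]
  simp only [margY]
  ring

end Joint

end CondRenyi

theorem upper_condRenyi_second_order {𝒳 𝒴 : Type*} [Fintype 𝒳] [Fintype 𝒴]
    (P : 𝒳 × 𝒴 → ℝ) (hP0 : ∀ p, 0 ≤ P p) (hP1 : ∑ p : 𝒳 × 𝒴, P p = 1) :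
    Tendsto (fun θ : ℝ => 2 * (condEnt P - condRenyiUp P θ) / θ)
      (nhdsWithin 0 (Set.Ioo (-1 : ℝ) 0 ∪ Set.Ioi 0)) (nhds (condVarEnt P)) := by
  have hlim := tendsto_mul_log_div_sq
    (eventually_of_mem (Ioi_mem_nhds one_pos) fun p hp =>
      CondRenyi.hasDerivAt_condNormSum hP0 hp)
    (CondRenyi.condNormSum_one hP1) (CondRenyi.sum_lpNormDeriv_one hP0)
    (CondRenyi.hasDerivAt_sum_lpNormDeriv_one hP0)
  have hne : ∀ θ ∈ Set.Ioo (-1 : ℝ) 0 ∪ Set.Ioi 0, θ ≠ 0 := by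
    rintro θ (h | h)
    exacts [h.2.ne, h.ne']
  have hshift : Tendsto (fun θ : ℝ => 1 + θ) (𝓝[Set.Ioo (-1) 0 ∪ Set.Ioi 0] 0) (𝓝[≠] 1) :=
    tendsto_nhdsWithin_of_tendsto_nhds_of_eventually_within _
      ((continuous_const.add continuous_id).tendsto' 0 1 (add_zero 1) |>.mono_left
        nhdsWithin_le_nhds)
      (eventually_nhdsWithin_of_forall fun θ hθ => by simpa using hne θ hθ)
  refine (hlim.comp hshift).congr' (eventually_nhdsWithin_of_forall fun θ hθ => ?_)
  have hθ := hne θ hθ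
  dsimp only [Function.comp_apply]
  rw [add_sub_cancel_left,
    show condRenyiUp P θ = -((1 + θ) / θ) * log (CondRenyi.condNormSum P (1 + θ)) from rfl]
  field_simp
  ring
end

section
/- Let Q_Y be a probability distribution on 𝒴 whose support contains the support of P_Y. Then lim_{θ→−1⁺} H_{1+θ}(P_XY|Q_Y) = log Σ_y Q_Y(y)·N(y), where N(y) := |{x ∈ 𝒳 : P_XY(x,y) > 0}|. -/
open Real Filter

/-- `N(y)`: the size of the support of `P_{X|Y}(·|y)`. -/
noncomputable def suppSize {𝒳 𝒴 : Type*} [Fintype 𝒳] (P : 𝒳 × 𝒴 → ℝ) (y : 𝒴) : ℕ :=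
  (Finset.univ.filter fun x : 𝒳 => 0 < P (x, y)).card

theorem condRenyiQ_tendsto_order_zero {𝒳 𝒴 : Type*} [Fintype 𝒳] [Fintype 𝒴]
    (P : 𝒳 × 𝒴 → ℝ) (hP0 : ∀ p, 0 ≤ P p) (hP1 : ∑ p : 𝒳 × 𝒴, P p = 1)
    (Q : 𝒴 → ℝ) (hQ0 : ∀ y, 0 ≤ Q y) (hQ1 : ∑ y : 𝒴, Q y = 1)
    (hQsupp : ∀ y, 0 < margY P y → 0 < Q y) :
    Tendsto (fun θ : ℝ => condRenyiQ P Q θ) (nhdsWithin (-1 : ℝ) (Set.Ioi (-1 : ℝ)))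
      (nhds (Real.log (∑ y : 𝒴, Q y * (suppSize P y : ℝ)))) := by
  classical
  -- there is a point with positive probability
  have hex : ∃ p : 𝒳 × 𝒴, 0 < P p := by
    by_contra h
    push_neg at h
    have h0 : ∑ p : 𝒳 × 𝒴, P p = 0 :=
      Finset.sum_eq_zero fun p _ => le_antisymm (h p) (hP0 p)
    rw [h0] at hP1; norm_num at hP1
  have hQpos : ∀ x y, 0 < P (x, y) → 0 < Q y := by
    intro x y h
    apply hQsupp y
    have : 0 < ∑ x' : 𝒳, P (x', y) :=
      Finset.sum_pos' (fun x' _ => hP0 _) ⟨x, Finset.mem_univ x, h⟩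
    simpa [margY] using this
  set S : ℝ → ℝ := fun θ => ∑ x : 𝒳, ∑ y : 𝒴,
    if 0 < P (x, y) then P (x, y) ^ (1 + θ) * Q y ^ (-θ) else 0 with hS
  have hScont : Continuous S := by
    apply continuous_finset_sum
    intro x _
    apply continuous_finset_sum
    intro y _
    by_cases h : 0 < P (x, y)
    · simp only [h, if_true]
      have h1 : Continuous fun θ : ℝ => P (x, y) ^ (1 + θ) := by
        simp only [Real.rpow_def_of_pos h]
        exact Real.continuous_exp.comp (by continuity)
      have h2 : Continuous fun θ : ℝ => Q y ^ (-θ) := by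
        simp only [Real.rpow_def_of_pos (hQpos x y h)]
        exact Real.continuous_exp.comp (by continuity)
      exact h1.mul h2
    · simp only [h, if_false]
      exact continuous_const
  have hSval : S (-1) = ∑ y : 𝒴, Q y * (suppSize P y : ℝ) := by
    show (∑ x : 𝒳, ∑ y : 𝒴,
        if 0 < P (x, y) then P (x, y) ^ (1 + (-1:ℝ)) * Q y ^ (-(-1:ℝ)) else 0) = _
    rw [Finset.sum_comm]
    refine Finset.sum_congr rfl fun y _ => ?_
    have : ∀ x : 𝒳, (if 0 < P (x, y) then P (x, y) ^ (1 + (-1:ℝ)) * Q y ^ (-(-1:ℝ)) else 0)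
        = if 0 < P (x, y) then Q y else 0 := by
      intro x
      by_cases h : 0 < P (x, y) <;> simp [h, Real.rpow_one]
    simp only [this]
    rw [← Finset.sum_filter, Finset.sum_const, suppSize, nsmul_eq_mul, mul_comm]
  have hSpos : 0 < S (-1) := by
    rw [hSval]
    obtain ⟨⟨x, y⟩, hp⟩ := hex
    apply Finset.sum_pos' (fun y' _ => mul_nonneg (hQ0 y') (Nat.cast_nonneg _))
    refine ⟨y, Finset.mem_univ y, mul_pos (hQpos x y hp) ?_⟩
    have : 0 < suppSize P y := by
      rw [suppSize]
      exact Finset.card_pos.mpr ⟨x, Finset.mem_filter.mpr ⟨Finset.mem_univ x, hp⟩⟩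
    exact_mod_cast this
  have hcont : ContinuousAt (fun θ : ℝ => condRenyiQ P Q θ) (-1) := by
    have h1 : ContinuousAt (fun θ : ℝ => -(1 / θ)) (-1) := by
      apply ContinuousAt.neg
      exact ContinuousAt.div continuousAt_const continuousAt_id (by norm_num)
    have h2 : ContinuousAt (fun θ : ℝ => Real.log (S θ)) (-1) :=
      (Real.continuousAt_log (ne_of_gt hSpos)).comp hScont.continuousAt
    exact h1.mul h2
  have hval : condRenyiQ P Q (-1) = Real.log (∑ y : 𝒴, Q y * (suppSize P y : ℝ)) := by
    have : condRenyiQ P Q (-1) = -(1 / (-1:ℝ)) * Real.log (S (-1)) := rfl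
    rw [this, hSval]; norm_num
  have := hcont.tendsto
  rw [hval] at this
  exact this.mono_left nhdsWithin_le_nhds
end

section
/- For every probability distribution P_XY on 𝒳×𝒴, lim_{θ→−1⁺} H↑_{1+θ}(X|Y) = log max_{y: P_Y(y)>0} N(y), where N(y) := |{x ∈ 𝒳 : P_XY(x,y) > 0}|. -/
open Real Filter

theorem condRenyiUp_tendsto_order_zero {𝒳 𝒴 : Type*} [Fintype 𝒳] [Fintype 𝒴]
    (P : 𝒳 × 𝒴 → ℝ) (hP0 : ∀ p, 0 ≤ P p) (hP1 : ∑ p : 𝒳 × 𝒴, P p = 1) :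
    Tendsto (fun θ : ℝ => condRenyiUp P θ) (nhdsWithin (-1 : ℝ) (Set.Ioi (-1 : ℝ)))
      (nhds (Real.log
        (((Finset.univ.filter fun y : 𝒴 => 0 < margY P y).sup fun y => suppSize P y : ℕ) : ℝ))) := by
  classical
  set M : ℕ := (Finset.univ.filter fun y : 𝒴 => 0 < margY P y).sup fun y => suppSize P y with hMdef
  -- there is a point of positive probability
  have hex : ∃ p : 𝒳 × 𝒴, 0 < P p := by
    by_contra h
    push_neg at h
    have h0 : ∑ p : 𝒳 × 𝒴, P p = 0 :=
      Finset.sum_eq_zero fun p _ => le_antisymm (h p) (hP0 p)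
    rw [hP1] at h0; norm_num at h0
  obtain ⟨⟨x₀', y₀'⟩, hp⟩ := hex
  have hmarg : 0 < margY P y₀' :=
    Finset.sum_pos' (fun x _ => hP0 _) ⟨x₀', Finset.mem_univ _, hp⟩
  have hYne : (Finset.univ.filter fun y : 𝒴 => 0 < margY P y).Nonempty :=
    ⟨y₀', by simp [hmarg]⟩
  obtain ⟨y₀, hy₀mem, hy₀⟩ :=
    Finset.exists_mem_eq_sup (Finset.univ.filter fun y : 𝒴 => 0 < margY P y) hYne
      (fun y => suppSize P y)
  have hy₀pos : 0 < margY P y₀ := (Finset.mem_filter.mp hy₀mem).2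
  set T : Finset 𝒳 := Finset.univ.filter fun x : 𝒳 => 0 < P (x, y₀) with hTdef
  have hTne : T.Nonempty := by
    by_contra h
    rw [Finset.not_nonempty_iff_eq_empty] at h
    have hall : ∀ x : 𝒳, P (x, y₀) = 0 := by
      intro x
      by_contra hx
      have : x ∈ T := Finset.mem_filter.mpr ⟨Finset.mem_univ _, lt_of_le_of_ne (hP0 _) (Ne.symm hx)⟩
      simp [h] at this
    have : margY P y₀ = 0 := Finset.sum_eq_zero fun x _ => hall x
    linarith
  have hMT : M = T.card := by rw [hMdef, hy₀]; rfl
  have hM1 : (1 : ℝ) ≤ (M : ℝ) := by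
    have : 1 ≤ M := by rw [hMT]; exact Finset.card_pos.mpr hTne
    exact_mod_cast this
  have hMpos : (0 : ℝ) < (M : ℝ) := lt_of_lt_of_le one_pos hM1
  have hPle1 : ∀ p, P p ≤ 1 := by
    intro p
    rw [← hP1]
    exact Finset.single_le_sum (fun q _ => hP0 q) (Finset.mem_univ p)
  set S : ℝ → ℝ := fun α => ∑ y : 𝒴, (∑ x : 𝒳, P (x, y) ^ α) ^ (1 / α) with hSdef
  set g : ℝ → ℝ := fun α => ∑ x ∈ T, P (x, y₀) ^ α with hgdef
  have hgfull : ∀ α : ℝ, α ≠ 0 → (∑ x : 𝒳, P (x, y₀) ^ α) = g α := by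
    intro α hα
    refine (Finset.sum_subset (Finset.subset_univ T) fun x _ hx => ?_).symm
    have : P (x, y₀) = 0 := by
      by_contra hx'
      exact hx (Finset.mem_filter.mpr ⟨Finset.mem_univ _,
        lt_of_le_of_ne (hP0 _) (Ne.symm hx')⟩)
    rw [this, Real.zero_rpow hα]
  have hgpos : ∀ α : ℝ, 0 < g α := fun α =>
    Finset.sum_pos (fun x hx => Real.rpow_pos_of_pos ((Finset.mem_filter.mp hx).2) α) hTne
  -- g tends to M
  have hgtend : Tendsto g (nhds 0) (nhds (M : ℝ)) := by
    have h1 : Tendsto g (nhds (0:ℝ)) (nhds (∑ x ∈ T, P (x, y₀) ^ (0:ℝ))) := by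
      apply tendsto_finset_sum
      intro x hx
      exact (Real.continuousAt_const_rpow (ne_of_gt (Finset.mem_filter.mp hx).2)).tendsto
    have h2 : (∑ x ∈ T, P (x, y₀) ^ (0:ℝ)) = (M : ℝ) := by
      simp only [Real.rpow_zero, Finset.sum_const, nsmul_eq_mul, mul_one, hMT]
    rwa [h2] at h1
  have hlow : Tendsto (fun α => Real.log (g α)) (nhdsWithin 0 (Set.Ioi 0)) (nhds (Real.log M)) :=
    ((Real.continuousAt_log hMpos.ne').tendsto.comp (hgtend.mono_left nhdsWithin_le_nhds))
  -- uniform bound : the inner sum is at most M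
  have hsum_le : ∀ α ∈ Set.Ioo (0:ℝ) 1, ∀ y : 𝒴, (∑ x : 𝒳, P (x, y) ^ α) ≤ (M : ℝ) := by
    intro α hα y
    have step1 : (∑ x : 𝒳, P (x, y) ^ α) ≤ (suppSize P y : ℝ) := by
      have : (∑ x : 𝒳, P (x, y) ^ α) ≤ ∑ x : 𝒳, (if 0 < P (x, y) then (1:ℝ) else 0) := by
        refine Finset.sum_le_sum fun x _ => ?_
        by_cases hx : 0 < P (x, y)
        · simp only [hx, if_true]
          exact Real.rpow_le_one (hP0 _) (hPle1 _) hα.1.le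
        · have : P (x, y) = 0 := le_antisymm (not_lt.mp hx) (hP0 _)
          simp [this, Real.zero_rpow (ne_of_gt hα.1)]
      rw [Finset.sum_boole] at this
      exact this
    refine step1.trans ?_
    rcases eq_or_lt_of_le (Finset.sum_nonneg fun x _ => hP0 (x, y) : 0 ≤ margY P y) with h | h
    · have : ∀ x : 𝒳, P (x, y) = 0 := by
        intro x
        have := (Finset.sum_eq_zero_iff_of_nonneg (fun x _ => hP0 (x, y))).mp h.symm
        exact this x (Finset.mem_univ x)
      have hz : suppSize P y = 0 := by
        unfold suppSize
        rw [Finset.card_eq_zero, Finset.filter_eq_empty_iff]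
        intro x _
        simp [this x]
      rw [hz]
      exact_mod_cast hMpos.le
    · have : suppSize P y ≤ M :=
        Finset.le_sup (f := fun y => suppSize P y)
          (Finset.mem_filter.mpr ⟨Finset.mem_univ _, h⟩)
      exact_mod_cast this
  have hSpos : ∀ α ∈ Set.Ioo (0:ℝ) 1, 0 < S α := by
    intro α hα
    refine Finset.sum_pos' (fun y _ => Real.rpow_nonneg
      (Finset.sum_nonneg fun x _ => Real.rpow_nonneg (hP0 _) _) _) ⟨y₀, Finset.mem_univ _, ?_⟩
    rw [hgfull α (ne_of_gt hα.1)]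
    exact Real.rpow_pos_of_pos (hgpos α) _
  -- lower bound for α * log (S α)
  have hlb : ∀ α ∈ Set.Ioo (0:ℝ) 1, Real.log (g α) ≤ α * Real.log (S α) := by
    intro α hα
    have h1 : (g α) ^ (1/α) ≤ S α := by
      have := Finset.single_le_sum
        (f := fun y : 𝒴 => (∑ x : 𝒳, P (x, y) ^ α) ^ (1 / α))
        (fun y _ => Real.rpow_nonneg
          (Finset.sum_nonneg fun x _ => Real.rpow_nonneg (hP0 _) _) _) (Finset.mem_univ y₀)
      rw [← hgfull α (ne_of_gt hα.1)]
      simpa only [hSdef] using this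
    have h2 : Real.log ((g α) ^ (1/α)) ≤ Real.log (S α) :=
      Real.log_le_log (Real.rpow_pos_of_pos (hgpos α) _) h1
    rw [Real.log_rpow (hgpos α)] at h2
    have h3 : α * (1/α * Real.log (g α)) ≤ α * Real.log (S α) :=
      mul_le_mul_of_nonneg_left h2 hα.1.le
    rwa [← mul_assoc, mul_one_div, div_self (ne_of_gt hα.1), one_mul] at h3
  -- upper bound for α * log (S α)
  have hYcard : (0:ℝ) < (Fintype.card 𝒴 : ℝ) := by
    have : 0 < Fintype.card 𝒴 := Fintype.card_pos_iff.mpr ⟨y₀⟩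
    exact_mod_cast this
  have hub : ∀ α ∈ Set.Ioo (0:ℝ) 1,
      α * Real.log (S α) ≤ α * Real.log (Fintype.card 𝒴 : ℝ) + Real.log M := by
    intro α hα
    have hSle : S α ≤ (Fintype.card 𝒴 : ℝ) * (M : ℝ) ^ (1/α) := by
      have : S α ≤ ∑ _y : 𝒴, (M : ℝ) ^ (1/α) := by
        refine Finset.sum_le_sum fun y _ => ?_
        exact Real.rpow_le_rpow (Finset.sum_nonneg fun x _ => Real.rpow_nonneg (hP0 _) _)
          (hsum_le α hα y) (one_div_pos.mpr hα.1).le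
      simpa [Finset.sum_const, nsmul_eq_mul] using this
    have h2 : Real.log (S α) ≤ Real.log ((Fintype.card 𝒴 : ℝ) * (M : ℝ) ^ (1/α)) :=
      Real.log_le_log (hSpos α hα) hSle
    rw [Real.log_mul (ne_of_gt hYcard) (ne_of_gt (Real.rpow_pos_of_pos hMpos _)),
      Real.log_rpow hMpos] at h2
    have h3 := mul_le_mul_of_nonneg_left h2 hα.1.le
    calc α * Real.log (S α) ≤ α * (Real.log (Fintype.card 𝒴 : ℝ) + 1/α * Real.log M) := h3
      _ = α * Real.log (Fintype.card 𝒴 : ℝ) + α * (1/α) * Real.log M := by ring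
      _ = α * Real.log (Fintype.card 𝒴 : ℝ) + Real.log M := by
          rw [mul_one_div, div_self (ne_of_gt hα.1), one_mul]
  have hup : Tendsto (fun α : ℝ => α * Real.log (Fintype.card 𝒴 : ℝ) + Real.log M)
      (nhdsWithin 0 (Set.Ioi 0)) (nhds (Real.log M)) := by
    have : Tendsto (fun α : ℝ => α * Real.log (Fintype.card 𝒴 : ℝ) + Real.log M)
        (nhds 0) (nhds ((0:ℝ) * Real.log (Fintype.card 𝒴 : ℝ) + Real.log M)) :=
      ((continuous_id.mul continuous_const).add continuous_const).tendsto 0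
    rw [zero_mul, zero_add] at this
    exact this.mono_left nhdsWithin_le_nhds
  have hmem : Set.Ioo (0:ℝ) 1 ∈ nhdsWithin (0:ℝ) (Set.Ioi 0) :=
    Ioo_mem_nhdsGT_of_mem (by norm_num : (0:ℝ) ∈ Set.Ico (0:ℝ) 1)
  have hmain : Tendsto (fun α => α * Real.log (S α)) (nhdsWithin 0 (Set.Ioi 0))
      (nhds (Real.log M)) := by
    refine tendsto_of_tendsto_of_tendsto_of_le_of_le' hlow hup ?_ ?_
    · filter_upwards [hmem] with α hα using hlb α hα
    · filter_upwards [hmem] with α hα using hub α hα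
  -- combine with the prefactor 1/(1-α)
  have hpre : Tendsto (fun α : ℝ => 1 / (1 - α)) (nhdsWithin 0 (Set.Ioi 0)) (nhds 1) := by
    have h1 : ContinuousAt (fun α : ℝ => 1 / (1 - α)) 0 := by
      apply ContinuousAt.div continuousAt_const (continuous_const.sub continuous_id).continuousAt
      norm_num
    have h3 := h1.tendsto.mono_left (nhdsWithin_le_nhds (s := Set.Ioi (0:ℝ)))
    convert h3 using 2
    norm_num
  have hF : Tendsto (fun α : ℝ => 1 / (1 - α) * (α * Real.log (S α)))
      (nhdsWithin 0 (Set.Ioi 0)) (nhds (Real.log M)) := by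
    have := hpre.mul hmain
    rwa [one_mul] at this
  -- change of variables θ ↦ θ + 1
  have hcv : Tendsto (fun θ : ℝ => θ + 1) (nhdsWithin (-1 : ℝ) (Set.Ioi (-1 : ℝ)))
      (nhdsWithin (0:ℝ) (Set.Ioi 0)) := by
    apply tendsto_nhdsWithin_of_tendsto_nhds_of_eventually_within
    · have h1 : Tendsto (fun θ : ℝ => θ + 1) (nhds (-1:ℝ)) (nhds ((-1:ℝ) + 1)) :=
        (continuous_id.add continuous_const).tendsto (-1)
      norm_num at h1
      exact h1.mono_left nhdsWithin_le_nhds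
    · filter_upwards [self_mem_nhdsWithin] with θ hθ
      simp only [Set.mem_Ioi] at hθ ⊢
      linarith
  have heq : ∀ θ : ℝ, condRenyiUp P θ = 1 / (1 - (θ + 1)) * ((θ + 1) * Real.log (S (θ + 1))) := by
    intro θ
    simp only [condRenyiUp, hSdef, add_comm (1:ℝ) θ]
    rw [show (1:ℝ) - (θ + 1) = -θ by ring, div_neg]
    ring
  have := hF.comp hcv
  refine this.congr fun θ => ?_
  exact (heq θ).symm
end

section
/- Fix θ ∈ (−1,0)∪(0,∞). Suppose v : 𝒳×𝒴 → ℝ satisfies v(x,y) ≥ 1 for all (x,y), min_{x,y} v(x,y) = 1, and Σ_{x,y} v(x,y)·W̃_θ((x,y)|(x',y')) = λ·v(x',y') for all (x',y') and some λ > 0. Let w(x,y) := P_{X₁Y₁}(x,y)^{1+θ} P_{Y₁}(y)^{−θ} (taken to be 0 when P_{X₁Y₁}(x,y)=0), where P_{Y₁}(y) := Σ_x P_{X₁Y₁}(x,y), and let ⟨v,w⟩ := Σ_{x,y} v(x,y)w(x,y). Then for every n ≥ 1: (n−1)·(−log λ) − log⟨v,w⟩ ≤ θ·H↓_{1+θ}(Xⁿ|Yⁿ)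 ≤ (n−1)·(−log λ) − log⟨v,w⟩ + log max_{x,y} v(x,y). -/
/-!
Because `W` is non-hidden, the `Yⁿ`-marginal of the chain is `P_{Y₁}(y₁) ∏ W_Y(yᵢ₊₁|yᵢ)`, and the
weight `(a, b) ↦ a^{1+θ} b^{-θ}` (zero at `a = 0`) is multiplicative; hence
`S := exp(-θ H↓_{1+θ}(Xⁿ|Yⁿ))` is the path sum `Σ_z w(z₁) ∏ W̃_θ(zᵢ₊₁|zᵢ)` of the tilted matrix.
Weighting the last state of each path by the eigenvector `v` turns this path sum into
`λⁿ⁻¹ ⟨v, w⟩`, and `1 ≤ v ≤ max v` gives `S ≤ λⁿ⁻¹ ⟨v, w⟩ ≤ (max v) · S`; take logarithms.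
-/

open Real Filter

/-- Joint distribution of a Markov chain of length `m+1` with initial distribution `P1`
and transition matrix `W` (where `W p p'` is the probability of moving from `p'` to `p`). -/
noncomputable def chainProb {𝒳 𝒴 : Type*} (W : 𝒳 × 𝒴 → 𝒳 × 𝒴 → ℝ) (P1 : 𝒳 × 𝒴 → ℝ)
    (m : ℕ) (z : Fin (m + 1) → 𝒳 × 𝒴) : ℝ :=
  P1 (z 0) * ∏ i : Fin m, W (z i.succ) (z i.castSucc)

/-- `θ · H↓_{1+θ}(Xⁿ|Yⁿ)` for the length-`(m+1)` Markov chain. -/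
noncomputable def thetaCondRenyiDownChain {𝒳 𝒴 : Type*} [Fintype 𝒳] [Fintype 𝒴]
    [DecidableEq 𝒴] (W : 𝒳 × 𝒴 → 𝒳 × 𝒴 → ℝ) (P1 : 𝒳 × 𝒴 → ℝ) (θ : ℝ) (m : ℕ) : ℝ :=
  -Real.log (∑ z : Fin (m + 1) → 𝒳 × 𝒴,
    if 0 < chainProb W P1 m z then
      chainProb W P1 m z ^ (1 + θ) *
        (∑ xn : Fin (m + 1) → 𝒳, chainProb W P1 m fun i => (xn i, (z i).2)) ^ (-θ)
    else 0)

theorem sum_path_mul_eq_prod_mul_sum {R α : Type*} [CommSemiring R] [Fintype α] (g v : α → R) :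
    ∀ {m : ℕ} (Q : Fin m → α → α → R) (c : Fin m → R),
      (∀ i x', ∑ x, v x * Q i x x' = c i * v x') →
      ∑ f : Fin (m + 1) → α, g (f 0) * (∏ i, Q i (f i.succ) (f i.castSucc)) * v (f (Fin.last m))
        = (∏ i, c i) * ∑ x, v x * g x
  | 0, Q, c, _ => by
      simp [← (Equiv.funUnique (Fin 1) α).symm.sum_comp, mul_comm]
  | m + 1, Q, c, hQ => by
      have hstep (f : Fin (m + 1) → α) :
          ∑ x, g (Fin.snoc (α := fun _ => α) f x 0) * (∏ i : Fin (m + 1),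
              Q i (Fin.snoc (α := fun _ => α) f x i.succ)
                (Fin.snoc (α := fun _ => α) f x i.castSucc)) * v x
            = c (Fin.last m) * (g (f 0) * (∏ i : Fin m, Q i.castSucc (f i.succ) (f i.castSucc)) *
                v (f (Fin.last m))) := by
        simp only [Fin.prod_univ_castSucc, Fin.succ_castSucc, Fin.snoc_castSucc, Fin.succ_last,
          Fin.snoc_last, Fin.snoc_apply_zero]
        calc _ = (∑ x, v x * Q (Fin.last m) x (f (Fin.last m))) *
                (g (f 0) * ∏ i : Fin m, Q i.castSucc (f i.succ) (f i.castSucc)) := by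
              rw [Finset.sum_mul]
              exact Finset.sum_congr rfl fun x _ => by ring
          _ = _ := by rw [hQ]; ring
      rw [← (Fin.snocEquiv fun _ => α).sum_comp, Fintype.sum_prod_type_right]
      simp only [Fin.snocEquiv_apply, Fin.snoc_last, hstep]
      rw [← Finset.mul_sum, sum_path_mul_eq_prod_mul_sum g v _ _ fun i => hQ i.castSucc,
        Fin.prod_univ_castSucc]
      ring

noncomputable def tiltedWeight (θ a b : ℝ) : ℝ :=
  if 0 < a then a ^ (1 + θ) * b ^ (-θ) else 0

section tiltedWeight

variable {θ a b a' b' : ℝ}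

theorem tiltedWeight_nonneg (hb : 0 ≤ b) : 0 ≤ tiltedWeight θ a b := by
  unfold tiltedWeight
  split_ifs with ha
  · exact mul_nonneg (rpow_nonneg ha.le _) (rpow_nonneg hb _)
  · exact le_rfl

theorem tiltedWeight_pos (ha : 0 < a) (hb : 0 < b) : 0 < tiltedWeight θ a b := by
  rw [tiltedWeight, if_pos ha]
  exact mul_pos (rpow_pos_of_pos ha _) (rpow_pos_of_pos hb _)

theorem tiltedWeight_mul (ha : 0 ≤ a) (ha' : 0 ≤ a') (hb : 0 ≤ b) (hb' : 0 ≤ b') :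
    tiltedWeight θ (a * a') (b * b') = tiltedWeight θ a b * tiltedWeight θ a' b' := by
  rcases ha.eq_or_lt with rfl | ha
  · simp [tiltedWeight]
  rcases ha'.eq_or_lt with rfl | ha'
  · simp [tiltedWeight]
  simp only [tiltedWeight, if_pos (mul_pos ha ha'), if_pos ha, if_pos ha', mul_rpow ha.le ha'.le,
    mul_rpow hb hb']
  ring

theorem tiltedWeight_prod {ι : Type*} (s : Finset ι) {a b : ι → ℝ} (ha : ∀ i ∈ s, 0 ≤ a i)
    (hb : ∀ i ∈ s, 0 ≤ b i) :
    tiltedWeight θ (∏ i ∈ s, a i) (∏ i ∈ s, b i) = ∏ i ∈ s, tiltedWeight θ (a i) (b i) := by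
  induction s using Finset.cons_induction with
  | empty => simp [tiltedWeight]
  | cons j s hj ih =>
    simp only [Finset.forall_mem_cons] at ha hb
    rw [Finset.prod_cons, Finset.prod_cons, Finset.prod_cons,
      tiltedWeight_mul ha.1 (Finset.prod_nonneg ha.2) hb.1 (Finset.prod_nonneg hb.2), ih ha.2 hb.2]

end tiltedWeight

section chain

variable {𝒳 𝒴 : Type*} [Fintype 𝒳] {W : 𝒳 × 𝒴 → 𝒳 × 𝒴 → ℝ} {WY : 𝒴 → 𝒴 → ℝ}

theorem nonneg_of_nonHidden (hW0 : ∀ p p', 0 ≤ W p p')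
    (hNH : ∀ (x' : 𝒳) (y y' : 𝒴), ∑ x : 𝒳, W (x, y) (x', y') = WY y y') (y : 𝒴) (p' : 𝒳 × 𝒴) :
    0 ≤ WY y p'.2 :=
  hNH p'.1 y p'.2 ▸ Finset.sum_nonneg fun _ _ => hW0 _ _

theorem sum_chainProb_fst_eq (hNH : ∀ (x' : 𝒳) (y y' : 𝒴), ∑ x : 𝒳, W (x, y) (x', y') = WY y y')
    (P1 : 𝒳 × 𝒴 → ℝ) (m : ℕ) (yn : Fin (m + 1) → 𝒴) :
    ∑ xn : Fin (m + 1) → 𝒳, chainProb W P1 m (fun i => (xn i, yn i))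
      = (∑ x, P1 (x, yn 0)) * ∏ i : Fin m, WY (yn i.succ) (yn i.castSucc) := by
  have := sum_path_mul_eq_prod_mul_sum (fun x => P1 (x, yn 0)) (fun _ => (1 : ℝ))
    (fun i x x' => W (x, yn i.succ) (x', yn i.castSucc)) (fun i => WY (yn i.succ) (yn i.castSucc))
    (fun i x' => by simp [hNH])
  simpa [chainProb, mul_comm] using this

theorem thetaCondRenyiDownChain_eq [Fintype 𝒴] [DecidableEq 𝒴] (hW0 : ∀ p p', 0 ≤ W p p')
    (hNH : ∀ (x' : 𝒳) (y y' : 𝒴), ∑ x : 𝒳, W (x, y) (x', y') = WY y y')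
    {P1 : 𝒳 × 𝒴 → ℝ} (hP0 : ∀ p, 0 ≤ P1 p) (θ : ℝ) (m : ℕ) :
    thetaCondRenyiDownChain W P1 θ m = -log (∑ z : Fin (m + 1) → 𝒳 × 𝒴,
      tiltedWeight θ (P1 (z 0)) (∑ x, P1 (x, (z 0).2)) *
        ∏ i : Fin m, tiltedWeight θ (W (z i.succ) (z i.castSucc))
          (WY (z i.succ).2 (z i.castSucc).2)) := by
  refine congrArg (fun s => -log s) (Finset.sum_congr rfl fun z _ => ?_)
  have hWY (i : Fin m) : 0 ≤ WY (z i.succ).2 (z i.castSucc).2 := nonneg_of_nonHidden hW0 hNH _ _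
  change tiltedWeight θ _ _ = _
  rw [sum_chainProb_fst_eq hNH, chainProb,
    tiltedWeight_mul (hP0 _) (Finset.prod_nonneg fun i _ => hW0 _ _)
      (Finset.sum_nonneg fun x _ => hP0 _) (Finset.prod_nonneg fun i _ => hWY i),
    tiltedWeight_prod _ (fun i _ => hW0 _ _) fun i _ => hWY i]

theorem sum_mul_tiltedWeight_pos [Fintype 𝒴] {P : 𝒳 × 𝒴 → ℝ} (hP0 : ∀ p, 0 ≤ P p)
    (hP : ∑ p, P p ≠ 0) {v : 𝒳 × 𝒴 → ℝ} (hv : ∀ p, 0 < v p) (θ : ℝ) :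
    0 < ∑ p, v p * tiltedWeight θ (P p) (∑ x, P (x, p.2)) := by
  obtain ⟨p₀, -, hp₀⟩ := Finset.exists_ne_zero_of_sum_ne_zero hP
  have hP₀ : 0 < P p₀ := (hP0 p₀).lt_of_ne' hp₀
  have hPY₀ : 0 < ∑ x, P (x, p₀.2) := hP₀.trans_le <|
    Finset.single_le_sum (f := fun x => P (x, p₀.2)) (fun _ _ => hP0 _) (Finset.mem_univ p₀.1)
  exact Finset.sum_pos'
    (fun p _ => mul_nonneg (hv p).le (tiltedWeight_nonneg (Finset.sum_nonneg fun _ _ => hP0 _)))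
    ⟨p₀, Finset.mem_univ _, mul_pos (hv p₀) (tiltedWeight_pos hP₀ hPY₀)⟩

end chain

theorem sum_le_sum_mul_and_sum_mul_le {ι : Type*} (s : Finset ι) {μ u : ι → ℝ} {V : ℝ}
    (hμ : ∀ i ∈ s, 0 ≤ μ i) (hu : ∀ i ∈ s, 1 ≤ u i) (huV : ∀ i ∈ s, u i ≤ V) :
    ∑ i ∈ s, μ i ≤ ∑ i ∈ s, μ i * u i ∧ ∑ i ∈ s, μ i * u i ≤ V * ∑ i ∈ s, μ i := by
  rw [Finset.mul_sum]
  exact ⟨Finset.sum_le_sum fun i hi => le_mul_of_one_le_right (hμ i hi) (hu i hi),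
    Finset.sum_le_sum fun i hi =>
      (mul_le_mul_of_nonneg_left (huV i hi) (hμ i hi)).trans_eq (mul_comm _ _)⟩

theorem neg_log_bounds_of_le_of_le_mul {S T V : ℝ} (hT : 0 < T) (hV : 0 ≤ V) (hST : S ≤ T)
    (hTS : T ≤ V * S) : -log T ≤ -log S ∧ -log S ≤ -log T + log V := by
  have hS : 0 < S := pos_of_mul_pos_right (hT.trans_le hTS) hV
  have hV : 0 < V := pos_of_mul_pos_left (hT.trans_le hTS) hS.le
  have := log_le_log hT hTS
  rw [log_mul hV.ne' hS.ne'] at this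
  exact ⟨neg_le_neg (log_le_log hS hST), by linarith⟩

theorem chain_thetaCondRenyiDown_finite_bounds_general {𝒳 𝒴 : Type*} [Fintype 𝒳] [Fintype 𝒴]
    [DecidableEq 𝒴]
    (W : 𝒳 × 𝒴 → 𝒳 × 𝒴 → ℝ) (hW0 : ∀ p p', 0 ≤ W p p')
    (WY : 𝒴 → 𝒴 → ℝ)
    (hNH : ∀ (x' : 𝒳) (y y' : 𝒴), ∑ x : 𝒳, W (x, y) (x', y') = WY y y')
    (θ : ℝ)
    (P1 : 𝒳 × 𝒴 → ℝ) (hP0 : ∀ p, 0 ≤ P1 p) (hP1 : ∑ p : 𝒳 × 𝒴, P1 p = 1)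
    (v : 𝒳 × 𝒴 → ℝ) (lam : ℝ) (hlam : 0 < lam)
    (hv_ge : ∀ p, 1 ≤ v p)
    (heig : ∀ p' : 𝒳 × 𝒴,
      (∑ p : 𝒳 × 𝒴, v p *
        (if 0 < W p p' then W p p' ^ (1 + θ) * WY p.2 p'.2 ^ (-θ) else 0)) = lam * v p') :
    ∀ m : ℕ,
      (m : ℝ) * (-Real.log lam)
          - Real.log (∑ p : 𝒳 × 𝒴, v p *
              (if 0 < P1 p then P1 p ^ (1 + θ) * (∑ x : 𝒳, P1 (x, p.2)) ^ (-θ) else 0))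
        ≤ thetaCondRenyiDownChain W P1 θ m
      ∧ thetaCondRenyiDownChain W P1 θ m
        ≤ (m : ℝ) * (-Real.log lam)
          - Real.log (∑ p : 𝒳 × 𝒴, v p *
              (if 0 < P1 p then P1 p ^ (1 + θ) * (∑ x : 𝒳, P1 (x, p.2)) ^ (-θ) else 0))
          + Real.log (⨆ p : 𝒳 × 𝒴, v p) := by
  intro m
  set w : 𝒳 × 𝒴 → ℝ := fun p => tiltedWeight θ (P1 p) (∑ x, P1 (x, p.2))
  set Wt : 𝒳 × 𝒴 → 𝒳 × 𝒴 → ℝ := fun p p' => tiltedWeight θ (W p p') (WY p.2 p'.2)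
  set μ : (Fin (m + 1) → 𝒳 × 𝒴) → ℝ := fun z => w (z 0) * ∏ i : Fin m, Wt (z i.succ) (z i.castSucc)
  have hμ z : 0 ≤ μ z := mul_nonneg (tiltedWeight_nonneg (Finset.sum_nonneg fun _ _ => hP0 _))
    (Finset.prod_nonneg fun _ _ => tiltedWeight_nonneg (nonneg_of_nonHidden hW0 hNH _ _))
  have hpath : ∑ z, μ z * v (z (Fin.last m)) = lam ^ m * ∑ p, v p * w p := by
    simpa using sum_path_mul_eq_prod_mul_sum w v (fun _ => Wt) (fun _ => lam) fun _ => heig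
  have hC : 0 < ∑ p, v p * w p :=
    sum_mul_tiltedWeight_pos hP0 (hP1 ▸ one_ne_zero) (fun p => one_pos.trans_le (hv_ge p)) θ
  have hlogT : -log (lam ^ m * ∑ p, v p * w p) = m * (-log lam) - log (∑ p, v p * w p) := by
    rw [log_mul (pow_ne_zero m hlam.ne') hC.ne', log_pow]
    ring
  obtain ⟨hST, hTS⟩ := sum_le_sum_mul_and_sum_mul_le Finset.univ (fun z _ => hμ z)
    (fun z _ => hv_ge (z (Fin.last m))) fun z _ => Finite.le_ciSup v (z (Fin.last m))
  -- the `if`-expressions of the statement are `w` and `Wt` unfolded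
  change m * -log lam - log (∑ p, v p * w p) ≤ _ ∧ _ ≤ m * -log lam - log (∑ p, v p * w p) + _
  rw [thetaCondRenyiDownChain_eq hW0 hNH hP0, ← hlogT]
  exact neg_log_bounds_of_le_of_le_mul (mul_pos (pow_pos hlam m) hC)
    (Real.iSup_nonneg fun p => zero_le_one.trans (hv_ge p)) (hpath ▸ hST) (hpath ▸ hTS)

theorem chain_thetaCondRenyiDown_finite_bounds {𝒳 𝒴 : Type*} [Fintype 𝒳] [Fintype 𝒴]
    [DecidableEq 𝒴]
    (W : 𝒳 × 𝒴 → 𝒳 × 𝒴 → ℝ) (hW0 : ∀ p p', 0 ≤ W p p')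
    (hW1 : ∀ p', ∑ p : 𝒳 × 𝒴, W p p' = 1)
    (WY : 𝒴 → 𝒴 → ℝ)
    (hNH : ∀ (x' : 𝒳) (y y' : 𝒴), ∑ x : 𝒳, W (x, y) (x', y') = WY y y')
    (θ : ℝ) (hθ : θ ∈ Set.Ioo (-1 : ℝ) 0 ∪ Set.Ioi 0)
    (P1 : 𝒳 × 𝒴 → ℝ) (hP0 : ∀ p, 0 ≤ P1 p) (hP1 : ∑ p : 𝒳 × 𝒴, P1 p = 1)
    (v : 𝒳 × 𝒴 → ℝ) (lam : ℝ) (hlam : 0 < lam)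
    (hv_ge : ∀ p, 1 ≤ v p) (hv_min : ∃ p, v p = 1)
    (heig : ∀ p' : 𝒳 × 𝒴,
      (∑ p : 𝒳 × 𝒴, v p *
        (if 0 < W p p' then W p p' ^ (1 + θ) * WY p.2 p'.2 ^ (-θ) else 0)) = lam * v p') :
    ∀ m : ℕ,
      (m : ℝ) * (-Real.log lam)
          - Real.log (∑ p : 𝒳 × 𝒴, v p *
              (if 0 < P1 p then P1 p ^ (1 + θ) * (∑ x : 𝒳, P1 (x, p.2)) ^ (-θ) else 0))
        ≤ thetaCondRenyiDownChain W P1 θ m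
      ∧ thetaCondRenyiDownChain W P1 θ m
        ≤ (m : ℝ) * (-Real.log lam)
          - Real.log (∑ p : 𝒳 × 𝒴, v p *
              (if 0 < P1 p then P1 p ^ (1 + θ) * (∑ x : 𝒳, P1 (x, p.2)) ^ (-θ) else 0))
          + Real.log (⨆ p : 𝒳 × 𝒴, v p) :=
  chain_thetaCondRenyiDown_finite_bounds_general W hW0 WY hNH θ P1 hP0 hP1 v lam hlam hv_ge heig
end

section
/- Fix θ ∈ (−1,0)∪(0,∞). Suppose v : 𝒴 → ℝ satisfies v(y) ≥ 1 for all y, min_y v(y) = 1, and Σ_y v(y)·K_θ(y|y') = κ·v(y') for all y' and some κ > 0. Let w(y) := [Σ_x P_{X₁Y₁}(x,y)^{1+θ}]^{1/(1+θ)} and ⟨v,w⟩ := Σ_y v(y)w(y). Then for every n ≥ 1: (n−1)·(−log κ) − log⟨v,w⟩ ≤ (θ/(1+θ))·H↑_{1+θ}(Xⁿ|Yⁿ) ≤ (n−1)·(−log κ) − log⟨v,w⟩ + log max_y v(y). -/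
open Real Filter

/-- `(θ/(1+θ)) · H↑_{1+θ}(Xⁿ|Yⁿ)` for the length-`(m+1)` Markov chain. -/
noncomputable def thetaCondRenyiUpChain {𝒳 𝒴 : Type*} [Fintype 𝒳] [Fintype 𝒴]
    (W : 𝒳 × 𝒴 → 𝒳 × 𝒴 → ℝ) (P1 : 𝒳 × 𝒴 → ℝ) (θ : ℝ) (m : ℕ) : ℝ :=
  -Real.log (∑ yn : Fin (m + 1) → 𝒴,
    (∑ xn : Fin (m + 1) → 𝒳,
      chainProb W P1 m (fun i => (xn i, yn i)) ^ (1 + θ)) ^ (1 / (1 + θ)))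

/-! Strong non-hiddenness lets the `𝒳`-coordinates be summed out one step at a time, so that the
sum inside the logarithm becomes a path sum over `𝒴`: `Σ_{yⁿ} w(y₁) ∏ K_θ(y_{i+1}|y_i)`.
Weighting every path by `v` at its endpoint, the left-eigenvector equation collapses the weighted
sum to `κ^{n-1} ⟨v,w⟩`; as `1 ≤ v ≤ max v`, this lies between the path sum and `max v` times it. -/

theorem sum_path_prod_mul_eq {α : Type*} [Fintype α] (g : α → ℝ) (m : ℕ)
    (K : Fin m → α → α → ℝ) (v : Fin (m + 1) → α → ℝ) (c : Fin m → ℝ)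
    (hK : ∀ i b, ∑ a, v i.succ a * K i a b = c i * v i.castSucc b) :
    ∑ z : Fin (m + 1) → α,
        g (z 0) * (∏ i, K i (z i.succ) (z i.castSucc)) * v (Fin.last m) (z (Fin.last m))
      = (∏ i, c i) * ∑ a, v 0 a * g a := by
  induction m with
  | zero =>
    simp only [Finset.univ_eq_empty, Finset.prod_empty, mul_one, one_mul]
    exact Fintype.sum_equiv (Equiv.funUnique (Fin 1) α) _ _ fun z => by
      simp [Fin.last, mul_comm]
  | succ m ih =>
    have ih' := ih (fun i => K i.castSucc) (fun i => v i.castSucc) (fun i => c i.castSucc)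
      fun i b => by simpa only [Fin.succ_castSucc] using hK i.castSucc b
    rw [← (Fin.snocEquiv fun _ => α).sum_comp, Fintype.sum_prod_type, Finset.sum_comm]
    simp only [Fin.snocEquiv_apply, Fin.prod_univ_castSucc, Fin.succ_castSucc, Fin.succ_last,
      Fin.snoc_castSucc, Fin.snoc_last, Fin.snoc_apply_zero]
    have last_step : ∀ z : Fin (m + 1) → α, ∀ P : ℝ,
        ∑ a, g (z 0) * (P * K (Fin.last m) a (z (Fin.last m))) * v (Fin.last (m + 1)) a
          = c (Fin.last m) * (g (z 0) * P * v (Fin.last m).castSucc (z (Fin.last m))) := by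
      intro z P
      rw [← Fin.succ_last, mul_left_comm, ← hK, Finset.mul_sum]
      exact Finset.sum_congr rfl fun a _ => by ring
    simp only [last_step, ← Finset.mul_sum, ih', Fin.castSucc_zero]
    ring

theorem sum_path_prod_mul_eigenvector_eq {α : Type*} [Fintype α] (g : α → ℝ) (m : ℕ)
    (K : α → α → ℝ) (v : α → ℝ) (κ : ℝ) (heig : ∀ b, ∑ a, v a * K a b = κ * v b) :
    ∑ z : Fin (m + 1) → α,
        g (z 0) * (∏ i : Fin m, K (z i.succ) (z i.castSucc)) * v (z (Fin.last m))
      = κ ^ m * ∑ a, v a * g a := by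
  simpa using sum_path_prod_mul_eq g m (fun _ => K) (fun _ => v) (fun _ => κ) fun _ => heig

section PathBounds

variable {α : Type*} {g : α → ℝ} {K : α → α → ℝ} {v : α → ℝ} {κ : ℝ}

lemma path_prod_nonneg (hg : ∀ a, 0 ≤ g a) (hK : ∀ a b, 0 ≤ K a b) {m : ℕ}
    (z : Fin (m + 1) → α) : 0 ≤ g (z 0) * ∏ i : Fin m, K (z i.succ) (z i.castSucc) :=
  mul_nonneg (hg _) (Finset.prod_nonneg fun _ _ => hK _ _)

lemma sum_path_prod_le_pow_mul [Fintype α] (hg : ∀ a, 0 ≤ g a) (hK : ∀ a b, 0 ≤ K a b)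
    (hv : ∀ a, 1 ≤ v a) (heig : ∀ b, ∑ a, v a * K a b = κ * v b) (m : ℕ) :
    ∑ z : Fin (m + 1) → α, g (z 0) * ∏ i : Fin m, K (z i.succ) (z i.castSucc)
      ≤ κ ^ m * ∑ a, v a * g a := by
  rw [← sum_path_prod_mul_eigenvector_eq g m K v κ heig]
  exact Finset.sum_le_sum fun z _ => le_mul_of_one_le_right (path_prod_nonneg hg hK z) (hv _)

lemma pow_mul_le_iSup_mul_sum_path_prod [Fintype α] (hg : ∀ a, 0 ≤ g a)
    (hK : ∀ a b, 0 ≤ K a b) (heig : ∀ b, ∑ a, v a * K a b = κ * v b) (m : ℕ) :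
    κ ^ m * ∑ a, v a * g a
      ≤ (⨆ a, v a) * ∑ z : Fin (m + 1) → α, g (z 0) * ∏ i : Fin m, K (z i.succ) (z i.castSucc) := by
  rw [← sum_path_prod_mul_eigenvector_eq g m K v κ heig, Finset.mul_sum]
  refine Finset.sum_le_sum fun z _ => ?_
  rw [mul_comm (⨆ a, v a)]
  exact mul_le_mul_of_nonneg_left (le_ciSup (Set.finite_range v).bddAbove _)
    (path_prod_nonneg hg hK z)

end PathBounds

lemma neg_log_le_and_le_neg_log_add_log {S T V : ℝ} (hS : 0 ≤ S) (hT : 0 < T) (hST : S ≤ T)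
    (hTS : T ≤ V * S) : -log T ≤ -log S ∧ -log S ≤ -log T + log V := by
  have hVS : 0 < V * S := hT.trans_le hTS
  have hS' : 0 < S := hS.lt_of_ne fun h => by simp [← h] at hVS
  have hV : 0 < V := pos_of_mul_pos_left hVS hS
  have h₁ := log_le_log hS' hST
  have h₂ := log_le_log hT hTS
  rw [log_mul hV.ne' hS'.ne'] at h₂
  constructor <;> linarith

section Chain

variable {𝒳 𝒴 : Type*} {W : 𝒳 × 𝒴 → 𝒳 × 𝒴 → ℝ} {P1 : 𝒳 × 𝒴 → ℝ}

lemma chainProb_rpow (hW0 : ∀ p p', 0 ≤ W p p') (hP0 : ∀ p, 0 ≤ P1 p) (s : ℝ) {m : ℕ}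
    (z : Fin (m + 1) → 𝒳 × 𝒴) :
    chainProb W P1 m z ^ s = P1 (z 0) ^ s * ∏ i : Fin m, W (z i.succ) (z i.castSucc) ^ s := by
  rw [chainProb, mul_rpow (hP0 _) (Finset.prod_nonneg fun _ _ => hW0 _ _),
    finsetProd_rpow _ _ fun _ _ => hW0 _ _]

lemma sum_chainProb_rpow [Fintype 𝒳] (hW0 : ∀ p p', 0 ≤ W p p') (hP0 : ∀ p, 0 ≤ P1 p) {s : ℝ}
    {Wt : 𝒴 → 𝒴 → ℝ} (hSNH : ∀ (x' : 𝒳) (y y' : 𝒴), ∑ x : 𝒳, W (x, y) (x', y') ^ s = Wt y y')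
    (m : ℕ) (yn : Fin (m + 1) → 𝒴) :
    ∑ xn : Fin (m + 1) → 𝒳, chainProb W P1 m (fun i => (xn i, yn i)) ^ s
      = (∑ x, P1 (x, yn 0) ^ s) * ∏ i : Fin m, Wt (yn i.succ) (yn i.castSucc) := by
  simp_rw [chainProb_rpow hW0 hP0]
  simpa [mul_comm] using sum_path_prod_mul_eq (fun x => P1 (x, yn 0) ^ s) m
    (fun i a b => W (a, yn i.succ) (b, yn i.castSucc) ^ s) (fun _ _ => 1)
    (fun i => Wt (yn i.succ) (yn i.castSucc)) fun i b => by simp [hSNH]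

lemma nonneg_of_forall_sum_rpow_eq [Fintype 𝒳] [Nonempty 𝒳] (hW0 : ∀ p p', 0 ≤ W p p')
    {s : ℝ} {Wt : 𝒴 → 𝒴 → ℝ}
    (hSNH : ∀ (x' : 𝒳) (y y' : 𝒴), ∑ x : 𝒳, W (x, y) (x', y') ^ s = Wt y y') (y y' : 𝒴) : 0 ≤ Wt y y' :=
  hSNH (Classical.arbitrary 𝒳) y y' ▸ Finset.sum_nonneg fun _ _ => rpow_nonneg (hW0 _ _) _

lemma rpow_sum_chainProb_rpow [Fintype 𝒳] [Nonempty 𝒳] (hW0 : ∀ p p', 0 ≤ W p p')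
    (hP0 : ∀ p, 0 ≤ P1 p) {s : ℝ} {Wt : 𝒴 → 𝒴 → ℝ}
    (hSNH : ∀ (x' : 𝒳) (y y' : 𝒴), ∑ x : 𝒳, W (x, y) (x', y') ^ s = Wt y y') (r : ℝ) (m : ℕ)
    (yn : Fin (m + 1) → 𝒴) :
    (∑ xn : Fin (m + 1) → 𝒳, chainProb W P1 m (fun i => (xn i, yn i)) ^ s) ^ r
      = (∑ x, P1 (x, yn 0) ^ s) ^ r * ∏ i : Fin m, Wt (yn i.succ) (yn i.castSucc) ^ r := by
  have hWt := nonneg_of_forall_sum_rpow_eq hW0 hSNH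
  rw [sum_chainProb_rpow hW0 hP0 hSNH m yn,
    mul_rpow (Finset.sum_nonneg fun _ _ => rpow_nonneg (hP0 _) _)
      (Finset.prod_nonneg fun _ _ => hWt _ _), finsetProd_rpow _ _ fun _ _ => hWt _ _]

end Chain

theorem chain_thetaCondRenyiUp_finite_bounds_general {𝒳 𝒴 : Type*} [Fintype 𝒳] [Fintype 𝒴]
    (W : 𝒳 × 𝒴 → 𝒳 × 𝒴 → ℝ) (hW0 : ∀ p p', 0 ≤ W p p')
    (Wt : ℝ → 𝒴 → 𝒴 → ℝ)
    (hSNH : ∀ t : ℝ, -1 < t → ∀ (x' : 𝒳) (y y' : 𝒴),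
      ∑ x : 𝒳, W (x, y) (x', y') ^ (1 + t) = Wt t y y')
    (θ : ℝ) (hθ : θ ∈ Set.Ioo (-1 : ℝ) 0 ∪ Set.Ioi 0)
    (P1 : 𝒳 × 𝒴 → ℝ) (hP0 : ∀ p, 0 ≤ P1 p) (hP1 : ∑ p : 𝒳 × 𝒴, P1 p = 1)
    (v : 𝒴 → ℝ) (κ : ℝ) (hκ : 0 < κ)
    (hv_ge : ∀ y, 1 ≤ v y)
    (heig : ∀ y' : 𝒴, ∑ y : 𝒴, v y * Wt θ y y' ^ (1 / (1 + θ)) = κ * v y') :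
    ∀ m : ℕ,
      (m : ℝ) * (-Real.log κ)
          - Real.log (∑ y : 𝒴, v y * (∑ x : 𝒳, P1 (x, y) ^ (1 + θ)) ^ (1 / (1 + θ)))
        ≤ thetaCondRenyiUpChain W P1 θ m
      ∧ thetaCondRenyiUpChain W P1 θ m
        ≤ (m : ℝ) * (-Real.log κ)
          - Real.log (∑ y : 𝒴, v y * (∑ x : 𝒳, P1 (x, y) ^ (1 + θ)) ^ (1 / (1 + θ)))
          + Real.log (⨆ y : 𝒴, v y) := by
  intro m
  have hθ₁ : -1 < θ := by
    rcases hθ with h | h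
    exacts [h.1, neg_one_lt_zero.trans h]
  obtain ⟨⟨x₀, y₀⟩, -, hp₀⟩ : ∃ p ∈ Finset.univ, (0 : 𝒳 × 𝒴 → ℝ) p < P1 p :=
    Finset.exists_lt_of_sum_lt (by simp [hP1])
  have : Nonempty 𝒳 := ⟨x₀⟩
  set g : 𝒴 → ℝ := fun y => (∑ x : 𝒳, P1 (x, y) ^ (1 + θ)) ^ (1 / (1 + θ))
  set K : 𝒴 → 𝒴 → ℝ := fun y y' => Wt θ y y' ^ (1 / (1 + θ))
  have hg : ∀ y, 0 ≤ g y := fun y =>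
    rpow_nonneg (Finset.sum_nonneg fun _ _ => rpow_nonneg (hP0 _) _) _
  have hK : ∀ y y', 0 ≤ K y y' := fun y y' =>
    rpow_nonneg (nonneg_of_forall_sum_rpow_eq hW0 (hSNH θ hθ₁) y y') _
  have hS : ∑ yn : Fin (m + 1) → 𝒴,
      (∑ xn : Fin (m + 1) → 𝒳, chainProb W P1 m (fun i => (xn i, yn i)) ^ (1 + θ)) ^ (1 / (1 + θ))
        = ∑ yn : Fin (m + 1) → 𝒴, g (yn 0) * ∏ i : Fin m, K (yn i.succ) (yn i.castSucc) :=
    Fintype.sum_congr _ _ (rpow_sum_chainProb_rpow hW0 hP0 (hSNH θ hθ₁) _ m)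
  have hA : 0 < ∑ y, v y * g y := by
    have hg₀ : 0 < g y₀ := rpow_pos_of_pos ((rpow_pos_of_pos hp₀ _).trans_le
      (Finset.single_le_sum (f := fun x => P1 (x, y₀) ^ (1 + θ))
        (fun _ _ => rpow_nonneg (hP0 _) _) (Finset.mem_univ x₀))) _
    exact (mul_pos (one_pos.trans_le (hv_ge y₀)) hg₀).trans_le (Finset.single_le_sum
      (fun y _ => mul_nonneg (zero_le_one.trans (hv_ge y)) (hg y)) (Finset.mem_univ y₀))
  have bounds := neg_log_le_and_le_neg_log_add_log
    (Finset.sum_nonneg fun z _ => path_prod_nonneg hg hK z) (mul_pos (pow_pos hκ m) hA)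
    (sum_path_prod_le_pow_mul hg hK hv_ge heig m) (pow_mul_le_iSup_mul_sum_path_prod hg hK heig m)
  rw [← hS, log_mul (pow_pos hκ m).ne' hA.ne', log_pow] at bounds
  unfold thetaCondRenyiUpChain
  constructor <;> linarith [bounds.1, bounds.2]

theorem chain_thetaCondRenyiUp_finite_bounds {𝒳 𝒴 : Type*} [Fintype 𝒳] [Fintype 𝒴]
    (W : 𝒳 × 𝒴 → 𝒳 × 𝒴 → ℝ) (hW0 : ∀ p p', 0 ≤ W p p')
    (hW1 : ∀ p', ∑ p : 𝒳 × 𝒴, W p p' = 1)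
    (Wt : ℝ → 𝒴 → 𝒴 → ℝ)
    (hSNH : ∀ t : ℝ, -1 < t → ∀ (x' : 𝒳) (y y' : 𝒴),
      ∑ x : 𝒳, W (x, y) (x', y') ^ (1 + t) = Wt t y y')
    (θ : ℝ) (hθ : θ ∈ Set.Ioo (-1 : ℝ) 0 ∪ Set.Ioi 0)
    (P1 : 𝒳 × 𝒴 → ℝ) (hP0 : ∀ p, 0 ≤ P1 p) (hP1 : ∑ p : 𝒳 × 𝒴, P1 p = 1)
    (v : 𝒴 → ℝ) (κ : ℝ) (hκ : 0 < κ)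
    (hv_ge : ∀ y, 1 ≤ v y) (hv_min : ∃ y, v y = 1)
    (heig : ∀ y' : 𝒴, ∑ y : 𝒴, v y * Wt θ y y' ^ (1 / (1 + θ)) = κ * v y') :
    ∀ m : ℕ,
      (m : ℝ) * (-Real.log κ)
          - Real.log (∑ y : 𝒴, v y * (∑ x : 𝒳, P1 (x, y) ^ (1 + θ)) ^ (1 / (1 + θ)))
        ≤ thetaCondRenyiUpChain W P1 θ m
      ∧ thetaCondRenyiUpChain W P1 θ m
        ≤ (m : ℝ) * (-Real.log κ)
          - Real.log (∑ y : 𝒴, v y * (∑ x : 𝒳, P1 (x, y) ^ (1 + θ)) ^ (1 / (1 + θ)))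
          + Real.log (⨆ y : 𝒴, v y) :=
  chain_thetaCondRenyiUp_finite_bounds_general W hW0 Wt hSNH θ hθ P1 hP0 hP1 v κ hκ hv_ge heig
end

section
/- Fix θ ∈ (−1,0)∪(0,∞). Suppose there exist κ > 0 and v : 𝒴 → ℝ with v(y) > 0 for all y such that Σ_y v(y)·K_θ(y|y') = κ·v(y') for all y'. Then for every initial distribution P_{X₁Y₁}, lim_{n→∞} (1/n)·H↑_{1+θ}(Xⁿ|Yⁿ) = −((1+θ)/θ)·log κ. -/
open Real Filter

/-- `H↑_{1+θ}(Xⁿ|Yⁿ)` for the length-`(m+1)` Markov chain. -/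
noncomputable def condRenyiUpChain {𝒳 𝒴 : Type*} [Fintype 𝒳] [Fintype 𝒴]
    (W : 𝒳 × 𝒴 → 𝒳 × 𝒴 → ℝ) (P1 : 𝒳 × 𝒴 → ℝ) (θ : ℝ) (m : ℕ) : ℝ :=
  -((1 + θ) / θ) * Real.log (∑ yn : Fin (m + 1) → 𝒴,
    (∑ xn : Fin (m + 1) → 𝒳,
      chainProb W P1 m (fun i => (xn i, yn i)) ^ (1 + θ)) ^ (1 / (1 + θ)))

lemma chainProb_nonneg {𝒳 𝒴 : Type*} (W : 𝒳 × 𝒴 → 𝒳 × 𝒴 → ℝ) (P1 : 𝒳 × 𝒴 → ℝ)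
    (hW0 : ∀ p p', 0 ≤ W p p') (hP0 : ∀ p, 0 ≤ P1 p) (m : ℕ) (z : Fin (m + 1) → 𝒳 × 𝒴) :
    0 ≤ chainProb W P1 m z :=
  mul_nonneg (hP0 _) (Finset.prod_nonneg fun _ _ => hW0 _ _)

lemma chainProb_succ {𝒳 𝒴 : Type*} (W : 𝒳 × 𝒴 → 𝒳 × 𝒴 → ℝ) (P1 : 𝒳 × 𝒴 → ℝ)
    (m : ℕ) (z : Fin (m + 2) → 𝒳 × 𝒴) :
    chainProb W P1 (m + 1) z
      = chainProb W P1 m (z ∘ Fin.castSucc) * W (z (Fin.last (m + 1))) (z ((Fin.last m).castSucc)) := by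
  unfold chainProb
  rw [Fin.prod_univ_castSucc]
  simp only [Function.comp_apply, Fin.succ_castSucc, Fin.succ_last, Fin.castSucc_zero]
  ring

lemma innerSum {𝒳 𝒴 : Type*} [Fintype 𝒳] [Fintype 𝒴]
    (W : 𝒳 × 𝒴 → 𝒳 × 𝒴 → ℝ) (hW0 : ∀ p p', 0 ≤ W p p')
    (Wt : ℝ → 𝒴 → 𝒴 → ℝ) (θ : ℝ) (hθ1 : -1 < θ)
    (hSNH : ∀ t : ℝ, -1 < t → ∀ (x' : 𝒳) (y y' : 𝒴),
      ∑ x : 𝒳, W (x, y) (x', y') ^ (1 + t) = Wt t y y')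
    (P1 : 𝒳 × 𝒴 → ℝ) (hP0 : ∀ p, 0 ≤ P1 p) :
    ∀ (m : ℕ) (yn : Fin (m + 1) → 𝒴),
      (∑ xn : Fin (m + 1) → 𝒳, chainProb W P1 m (fun i => (xn i, yn i)) ^ (1 + θ))
        = (∑ x : 𝒳, P1 (x, yn 0) ^ (1 + θ)) * ∏ i : Fin m, Wt θ (yn i.succ) (yn i.castSucc) := by
  intro m
  induction m with
  | zero =>
    intro yn
    simp only [Fin.prod_univ_zero, mul_one]
    rw [← Equiv.sum_comp (Equiv.funUnique (Fin 1) 𝒳).symm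
      (fun xn => chainProb W P1 0 (fun i => (xn i, yn i)) ^ (1 + θ))]
    refine Finset.sum_congr rfl fun x _ => ?_
    simp [chainProb]
  | succ m ih =>
    intro yn
    have key : ∀ xn : Fin (m + 2) → 𝒳,
        chainProb W P1 (m + 1) (fun i => (xn i, yn i)) ^ (1 + θ)
          = chainProb W P1 m (fun i => (xn i.castSucc, yn i.castSucc)) ^ (1 + θ)
            * W (xn (Fin.last (m + 1)), yn (Fin.last (m + 1)))
                (xn ((Fin.last m).castSucc), yn ((Fin.last m).castSucc)) ^ (1 + θ) := by
      intro xn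
      rw [chainProb_succ]
      exact Real.mul_rpow (chainProb_nonneg W P1 hW0 hP0 _ _) (hW0 _ _)
    simp only [key]
    rw [← Equiv.sum_comp (Fin.snocEquiv (fun _ : Fin (m + 2) => 𝒳))]
    rw [Fintype.sum_prod_type]
    have step : ∀ x : 𝒳, ∀ xs : Fin (m + 1) → 𝒳,
        (Fin.snocEquiv (fun _ : Fin (m + 2) => 𝒳) (x, xs)) = Fin.snoc xs x := by
      intro x xs; funext i; rfl
    simp only [step]
    simp only [Fin.snoc_castSucc, Fin.snoc_last]
    rw [Finset.sum_comm]
    have inner : ∀ xs : Fin (m + 1) → 𝒳,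
        (∑ x : 𝒳, chainProb W P1 m (fun i => (xs i, yn i.castSucc)) ^ (1 + θ)
          * W (x, yn (Fin.last (m + 1))) (xs (Fin.last m), yn ((Fin.last m).castSucc)) ^ (1 + θ))
        = chainProb W P1 m (fun i => (xs i, yn i.castSucc)) ^ (1 + θ)
          * Wt θ (yn (Fin.last (m + 1))) (yn ((Fin.last m).castSucc)) := by
      intro xs
      rw [← Finset.mul_sum, hSNH θ hθ1 (xs (Fin.last m))]
    simp only [inner]
    rw [← Finset.sum_mul]
    have ihy := ih (fun i => yn i.castSucc)
    rw [ihy]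
    rw [Fin.prod_univ_castSucc (f := fun i : Fin (m + 1) => Wt θ (yn i.succ) (yn i.castSucc))]
    simp only [Fin.succ_castSucc, Fin.succ_last, Fin.castSucc_zero]
    ring

lemma pathSum_eq {𝒴 : Type*} [Fintype 𝒴] (M : 𝒴 → 𝒴 → ℝ) :
    ∀ (m : ℕ) (g : 𝒴 → ℝ),
      (∑ yn : Fin (m + 1) → 𝒴, g (yn 0) * ∏ i : Fin m, M (yn i.succ) (yn i.castSucc))
        = ∑ y : 𝒴, ((fun (h : 𝒴 → ℝ) y => ∑ y' : 𝒴, M y y' * h y')^[m] g) y := by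
  intro m
  induction m with
  | zero =>
    intro g
    simp only [Fin.prod_univ_zero, mul_one, Function.iterate_zero, id_eq]
    rw [← Equiv.sum_comp (Equiv.funUnique (Fin 1) 𝒴).symm (fun yn => g (yn 0))]
    rfl
  | succ m ih =>
    intro g
    rw [← Equiv.sum_comp (Fin.consEquiv (fun _ : Fin (m + 2) => 𝒴))]
    rw [Fintype.sum_prod_type]
    have step : ∀ (y₀ : 𝒴) (ys : Fin (m + 1) → 𝒴),
        (Fin.consEquiv (fun _ : Fin (m + 2) => 𝒴)) (y₀, ys) = Fin.cons y₀ ys := by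
      intro y₀ ys; rfl
    simp only [step]
    have expand : ∀ (y₀ : 𝒴) (ys : Fin (m + 1) → 𝒴),
        g ((Fin.cons y₀ ys : Fin (m + 2) → 𝒴) 0)
            * ∏ i : Fin (m + 1), M ((Fin.cons y₀ ys : Fin (m + 2) → 𝒴) i.succ)
                ((Fin.cons y₀ ys : Fin (m + 2) → 𝒴) i.castSucc)
          = (M (ys 0) y₀ * g y₀) * ∏ i : Fin m, M (ys i.succ) (ys i.castSucc) := by
      intro y₀ ys
      rw [Fin.prod_univ_succ]
      simp only [Fin.cons_zero, Fin.cons_succ, Fin.castSucc_zero, ← Fin.succ_castSucc]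
      ring
    rw [Finset.sum_congr rfl fun y₀ _ => Finset.sum_congr rfl fun ys _ => expand y₀ ys]
    rw [Finset.sum_comm]
    have inner : ∀ ys : Fin (m + 1) → 𝒴,
        (∑ y₀ : 𝒴, (M (ys 0) y₀ * g y₀) * ∏ i : Fin m, M (ys i.succ) (ys i.castSucc))
          = (∑ y₀ : 𝒴, M (ys 0) y₀ * g y₀) * ∏ i : Fin m, M (ys i.succ) (ys i.castSucc) := by
      intro ys; rw [Finset.sum_mul]
    simp only [inner]
    rw [ih (fun y => ∑ y' : 𝒴, M y y' * g y')]
    rw [← Function.iterate_succ_apply]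

lemma lin_tendsto (a L : ℝ) :
    Tendsto (fun m : ℕ => (1 / ((m : ℝ) + 1)) * (a + m * L)) atTop (nhds L) := by
  have h0 : Tendsto (fun m : ℕ => (a - L) * (1 / ((m : ℝ) + 1)) + L) atTop (nhds L) := by
    have := (tendsto_one_div_add_atTop_nhds_zero_nat).const_mul (a - L)
    have h := this.add_const L
    simpa using h
  refine h0.congr fun m => ?_
  have hm : ((m : ℝ) + 1) ≠ 0 := by positivity
  field_simp
  ring

theorem chain_condRenyiUp_rate {𝒳 𝒴 : Type*} [Fintype 𝒳] [Fintype 𝒴]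
    (W : 𝒳 × 𝒴 → 𝒳 × 𝒴 → ℝ) (hW0 : ∀ p p', 0 ≤ W p p')
    (hW1 : ∀ p', ∑ p : 𝒳 × 𝒴, W p p' = 1)
    (Wt : ℝ → 𝒴 → 𝒴 → ℝ)
    (hSNH : ∀ t : ℝ, -1 < t → ∀ (x' : 𝒳) (y y' : 𝒴),
      ∑ x : 𝒳, W (x, y) (x', y') ^ (1 + t) = Wt t y y')
    (θ : ℝ) (hθ : θ ∈ Set.Ioo (-1 : ℝ) 0 ∪ Set.Ioi 0)
    (κ : ℝ) (hκ : 0 < κ) (v : 𝒴 → ℝ) (hv_pos : ∀ y, 0 < v y)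
    (heig : ∀ y' : 𝒴, ∑ y : 𝒴, v y * Wt θ y y' ^ (1 / (1 + θ)) = κ * v y')
    (P1 : 𝒳 × 𝒴 → ℝ) (hP0 : ∀ p, 0 ≤ P1 p) (hP1 : ∑ p : 𝒳 × 𝒴, P1 p = 1) :
    Tendsto (fun m : ℕ => (1 / ((m : ℝ) + 1)) * condRenyiUpChain W P1 θ m)
      atTop (nhds (-((1 + θ) / θ) * Real.log κ)) := by
  classical
  -- basic facts about θ
  have hθ1 : -1 < θ := by
    rcases hθ with h | h
    · exact h.1
    · linarith [h.out]
  have hθpos : (0 : ℝ) < 1 + θ := by linarith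
  -- nonemptiness
  have h𝒳 : Nonempty 𝒳 := by
    by_contra h
    rw [not_nonempty_iff] at h
    rw [Finset.univ_eq_empty, Finset.sum_empty] at hP1
    norm_num at hP1
  have h𝒴 : Nonempty 𝒴 := by
    by_contra h
    rw [not_nonempty_iff] at h
    rw [Finset.univ_eq_empty, Finset.sum_empty] at hP1
    norm_num at hP1
  -- key objects
  set K : 𝒴 → 𝒴 → ℝ := fun y y' => Wt θ y y' ^ (1 / (1 + θ)) with hKdef
  set g : 𝒴 → ℝ := fun y => (∑ x : 𝒳, P1 (x, y) ^ (1 + θ)) ^ (1 / (1 + θ)) with hgdef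
  set T : (𝒴 → ℝ) → (𝒴 → ℝ) := fun h y => ∑ y' : 𝒴, K y y' * h y' with hTdef
  set Z : ℕ → ℝ := fun m => ∑ yn : Fin (m + 1) → 𝒴,
    (∑ xn : Fin (m + 1) → 𝒳,
      chainProb W P1 m (fun i => (xn i, yn i)) ^ (1 + θ)) ^ (1 / (1 + θ)) with hZdef
  have hWt0 : ∀ y y', 0 ≤ Wt θ y y' := by
    intro y y'
    rw [← hSNH θ hθ1 (Classical.arbitrary 𝒳) y y']
    exact Finset.sum_nonneg fun x _ => Real.rpow_nonneg (hW0 _ _) _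
  have hK0 : ∀ y y', 0 ≤ K y y' := fun y y' => Real.rpow_nonneg (hWt0 y y') _
  have hg0 : ∀ y, 0 ≤ g y := fun y => Real.rpow_nonneg
    (Finset.sum_nonneg fun x _ => Real.rpow_nonneg (hP0 _) _) _
  -- Z m = ∑ y, T^[m] g y
  have hZ : ∀ m, Z m = ∑ y : 𝒴, (T^[m] g) y := by
    intro m
    simp only [hZdef]
    have e1 : ∀ yn : Fin (m + 1) → 𝒴,
        (∑ xn : Fin (m + 1) → 𝒳,
          chainProb W P1 m (fun i => (xn i, yn i)) ^ (1 + θ)) ^ (1 / (1 + θ))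
        = g (yn 0) * ∏ i : Fin m, K (yn i.succ) (yn i.castSucc) := by
      intro yn
      rw [innerSum W hW0 Wt θ hθ1 hSNH P1 hP0 m yn]
      rw [Real.mul_rpow (Finset.sum_nonneg fun x _ => Real.rpow_nonneg (hP0 _) _)
        (Finset.prod_nonneg fun i _ => hWt0 _ _)]
      rw [← Real.finset_prod_rpow _ _ (fun i _ => hWt0 _ _)]
    rw [Finset.sum_congr rfl fun yn _ => e1 yn]
    exact pathSum_eq K m g
  -- nonnegativity of iterates
  have hT0 : ∀ m y, 0 ≤ (T^[m] g) y := by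
    intro m
    induction m with
    | zero => simpa using hg0
    | succ m ih =>
      intro y
      rw [Function.iterate_succ_apply']
      exact Finset.sum_nonneg fun y' _ => mul_nonneg (hK0 _ _) (ih y')
  -- eigen relation for iterates
  set S : ℝ := ∑ y : 𝒴, v y * g y with hSdef
  have hvT : ∀ m, ∑ y : 𝒴, v y * (T^[m] g) y = κ ^ m * S := by
    intro m
    induction m with
    | zero => simp [hSdef]
    | succ m ih =>
      have step : ∀ h : 𝒴 → ℝ, ∑ y : 𝒴, v y * T h y = κ * ∑ y : 𝒴, v y * h y := by
        intro h
        rw [hTdef]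
        simp only
        calc ∑ y : 𝒴, v y * ∑ y' : 𝒴, K y y' * h y'
            = ∑ y : 𝒴, ∑ y' : 𝒴, v y * K y y' * h y' := by
              refine Finset.sum_congr rfl fun y _ => ?_
              rw [Finset.mul_sum]
              exact Finset.sum_congr rfl fun y' _ => by ring
          _ = ∑ y' : 𝒴, ∑ y : 𝒴, v y * K y y' * h y' := Finset.sum_comm
          _ = ∑ y' : 𝒴, (∑ y : 𝒴, v y * K y y') * h y' := by
              refine Finset.sum_congr rfl fun y' _ => ?_
              rw [Finset.sum_mul]
          _ = ∑ y' : 𝒴, (κ * v y') * h y' := by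
              refine Finset.sum_congr rfl fun y' _ => ?_
              rw [heig y']
          _ = κ * ∑ y' : 𝒴, v y' * h y' := by
              rw [Finset.mul_sum]
              exact Finset.sum_congr rfl fun y' _ => by ring
      calc ∑ y : 𝒴, v y * (T^[m + 1] g) y
          = ∑ y : 𝒴, v y * T (T^[m] g) y := by
            refine Finset.sum_congr rfl fun y _ => ?_
            rw [Function.iterate_succ_apply']
        _ = κ * ∑ y : 𝒴, v y * (T^[m] g) y := step _
        _ = κ ^ (m + 1) * S := by rw [ih]; ring
  -- positivity of S
  have hS : 0 < S := by
    obtain ⟨p, hp⟩ : ∃ p, 0 < P1 p := by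
      by_contra h
      push_neg at h
      have : ∀ p, P1 p = 0 := fun p => le_antisymm (h p) (hP0 p)
      rw [Finset.sum_congr rfl fun p _ => this p, Finset.sum_const, smul_zero] at hP1
      norm_num at hP1
    have hg0p : 0 < g p.2 := by
      have h1 : 0 < P1 (p.1, p.2) ^ (1 + θ) := Real.rpow_pos_of_pos hp _
      have h2 : P1 (p.1, p.2) ^ (1 + θ) ≤ ∑ x : 𝒳, P1 (x, p.2) ^ (1 + θ) :=
        Finset.single_le_sum (f := fun x : 𝒳 => P1 (x, p.2) ^ (1 + θ))
          (fun x _ => Real.rpow_nonneg (hP0 _) _) (Finset.mem_univ p.1)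
      exact Real.rpow_pos_of_pos (lt_of_lt_of_le h1 h2) _
    have : v p.2 * g p.2 ≤ S :=
      Finset.single_le_sum (fun y _ => mul_nonneg (hv_pos y).le (hg0 y)) (Finset.mem_univ p.2)
    exact lt_of_lt_of_le (mul_pos (hv_pos p.2) hg0p) this
  -- comparison constants
  set C : ℝ := ∑ y : 𝒴, (v y)⁻¹ with hCdef
  set c : ℝ := (∑ y : 𝒴, v y)⁻¹ with hcdef
  have hvsum : 0 < ∑ y : 𝒴, v y := Finset.sum_pos (fun y _ => hv_pos y) Finset.univ_nonempty
  have hCpos : 0 < C := Finset.sum_pos (fun y _ => inv_pos.mpr (hv_pos y)) Finset.univ_nonempty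
  have hcpos : 0 < c := inv_pos.mpr hvsum
  have hC : ∀ y, 1 ≤ C * v y := by
    intro y
    have h1 : (v y)⁻¹ ≤ C :=
      Finset.single_le_sum (fun y _ => (inv_pos.mpr (hv_pos y)).le) (Finset.mem_univ y)
    calc (1 : ℝ) = (v y)⁻¹ * v y := (inv_mul_cancel₀ (hv_pos y).ne').symm
      _ ≤ C * v y := mul_le_mul_of_nonneg_right h1 (hv_pos y).le
  have hc : ∀ y, c * v y ≤ 1 := by
    intro y
    have h1 : v y ≤ ∑ y' : 𝒴, v y' :=
      Finset.single_le_sum (fun y _ => (hv_pos y).le) (Finset.mem_univ y)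
    calc c * v y ≤ c * ∑ y' : 𝒴, v y' := mul_le_mul_of_nonneg_left h1 hcpos.le
      _ = 1 := inv_mul_cancel₀ hvsum.ne'
  -- bounds on Z
  have hZub : ∀ m, Z m ≤ C * (κ ^ m * S) := by
    intro m
    rw [hZ m, ← hvT m, Finset.mul_sum]
    refine Finset.sum_le_sum fun y _ => ?_
    calc (T^[m] g) y = 1 * (T^[m] g) y := (one_mul _).symm
      _ ≤ (C * v y) * (T^[m] g) y := mul_le_mul_of_nonneg_right (hC y) (hT0 m y)
      _ = C * (v y * (T^[m] g) y) := by ring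
  have hZlb : ∀ m, c * (κ ^ m * S) ≤ Z m := by
    intro m
    rw [hZ m, ← hvT m, Finset.mul_sum]
    refine Finset.sum_le_sum fun y _ => ?_
    calc c * (v y * (T^[m] g) y) = (c * v y) * (T^[m] g) y := by ring
      _ ≤ 1 * (T^[m] g) y := mul_le_mul_of_nonneg_right (hc y) (hT0 m y)
      _ = (T^[m] g) y := one_mul _
  have hZpos : ∀ m, 0 < Z m := fun m =>
    lt_of_lt_of_le (mul_pos hcpos (mul_pos (pow_pos hκ m) hS)) (hZlb m)
  -- logarithmic bounds
  have hlog_lb : ∀ m : ℕ, Real.log (c * S) + m * Real.log κ ≤ Real.log (Z m) := by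
    intro m
    have h1 : Real.log (c * (κ ^ m * S)) ≤ Real.log (Z m) :=
      Real.log_le_log (mul_pos hcpos (mul_pos (pow_pos hκ m) hS)) (hZlb m)
    calc Real.log (c * S) + m * Real.log κ
        = Real.log (c * (κ ^ m * S)) := by
          rw [Real.log_mul hcpos.ne' (mul_pos (pow_pos hκ m) hS).ne',
            Real.log_mul (pow_pos hκ m).ne' hS.ne', Real.log_pow,
            Real.log_mul hcpos.ne' hS.ne']
          ring
      _ ≤ Real.log (Z m) := h1
  have hlog_ub : ∀ m : ℕ, Real.log (Z m) ≤ Real.log (C * S) + m * Real.log κ := by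
    intro m
    have h1 : Real.log (Z m) ≤ Real.log (C * (κ ^ m * S)) :=
      Real.log_le_log (hZpos m) (hZub m)
    calc Real.log (Z m) ≤ Real.log (C * (κ ^ m * S)) := h1
      _ = Real.log (C * S) + m * Real.log κ := by
          rw [Real.log_mul hCpos.ne' (mul_pos (pow_pos hκ m) hS).ne',
            Real.log_mul (pow_pos hκ m).ne' hS.ne', Real.log_pow,
            Real.log_mul hCpos.ne' hS.ne']
          ring
  -- the limit of normalized log Z
  have main : Tendsto (fun m : ℕ => (1 / ((m : ℝ) + 1)) * Real.log (Z m))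
      atTop (nhds (Real.log κ)) := by
    refine tendsto_of_tendsto_of_tendsto_of_le_of_le
      (lin_tendsto (Real.log (c * S)) (Real.log κ))
      (lin_tendsto (Real.log (C * S)) (Real.log κ)) ?_ ?_
    · intro m
      have := hlog_lb m
      have hm : (0 : ℝ) ≤ 1 / ((m : ℝ) + 1) := by positivity
      exact mul_le_mul_of_nonneg_left this hm
    · intro m
      have := hlog_ub m
      have hm : (0 : ℝ) ≤ 1 / ((m : ℝ) + 1) := by positivity
      exact mul_le_mul_of_nonneg_left this hm
  -- conclude
  have heq : (fun m : ℕ => (1 / ((m : ℝ) + 1)) * condRenyiUpChain W P1 θ m)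
      = fun m : ℕ => -((1 + θ) / θ) * ((1 / ((m : ℝ) + 1)) * Real.log (Z m)) := by
    funext m
    show (1 / ((m : ℝ) + 1)) * (-((1 + θ) / θ) * Real.log (Z m)) = _
    ring
  rw [heq]
  exact main.const_mul _
end
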